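/- arXiv:1706.05651 — 6 statements merged into one kernel-verified Lean document; each statement's English description precedes it below -/
import Mathlib

section
/- Let q be a prime, and let t, m, ℓ be positive integers. Let X be a subset of (ℤ/qℤ)^t, let f_1,...,f_m : X → ℤ/qℤ, let σ_1,...,σ_{2ℓ} be residues mod q each nonzero, and let λ_1,...,λ_m ∈ ℤ/qℤ. Then the number of tuples (x_1,...,x_{2ℓ}) ∈ X^{2ℓ} satisfying σ_1 f_j(x_1)+⋯+σ_{2ℓ} f_j(x_{2ℓ}) ≡ λ_j (mod q) for all j = 1,...,m is at most the number of tuples (x_1,...,x_{2ℓ}) ∈ X^{2ℓ} satisfying Σ_{i=1}^{2ℓ} (-1)^i f_j(x_i) ≡ 0 (mod q) for all j = 1,...,m. -/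
/-!
Encode the `m` congruences as one equation `∑ i, c i * F (x i) = v` in the finite ring
`R = (ℤ/qℤ)^m`, with `F x = (f_j x)_j`. Orthogonality of the additive characters `ψ` of `R` gives
`|R| · N(c, v) = ∑_ψ ∏_i S(ψ(c_i ·)) ψ(-v)`, where `S(ψ) = ∑_{x ∈ X} ψ(F x)`. By the triangle
inequality and AM-GM this is at most `(2ℓ)⁻¹ ∑_i ∑_ψ |S(ψ(c_i ·))|^{2ℓ}`, and for a unit `c_i` the
map `ψ ↦ ψ(c_i ·)` permutes the characters, so the bound is `∑_ψ |S(ψ)|^{2ℓ}`. For the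
alternating coefficients the product is `(S(ψ⁻¹) S(ψ))^ℓ = |S(ψ)|^{2ℓ}` exactly, so that count
attains the bound.
-/

open Finset ComplexConjugate

lemma AddChar.map_sum_eq_prod {A M ι : Type*} [AddCommMonoid A] [CommMonoid M]
    (ψ : AddChar A M) (s : Finset ι) (g : ι → A) : ψ (∑ i ∈ s, g i) = ∏ i ∈ s, ψ (g i) :=
  map_sum ψ.toAddMonoidHom g s

lemma prod_le_sum_pow_card_div_card {ι : Type*} [Fintype ι] [Nonempty ι] (b : ι → ℝ)
    (hb : ∀ i, 0 ≤ b i) : ∏ i, b i ≤ (∑ i, b i ^ Fintype.card ι) / Fintype.card ι := by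
  have hn : (Fintype.card ι : ℝ) ≠ 0 := Nat.cast_ne_zero.mpr Fintype.card_ne_zero
  calc ∏ i, b i = ∏ i, (b i ^ Fintype.card ι) ^ (Fintype.card ι : ℝ)⁻¹ := by
        refine prod_congr rfl fun i _ => ?_
        rw [← Real.rpow_natCast, ← Real.rpow_mul (hb i), mul_inv_cancel₀ hn, Real.rpow_one]
    _ ≤ ∑ i, (Fintype.card ι : ℝ)⁻¹ * b i ^ Fintype.card ι :=
        Real.geom_mean_le_arith_mean_weighted _ _ _ (fun _ _ => by positivity)
          (by simp [card_univ, hn]) (fun i _ => pow_nonneg (hb i) _)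
    _ = (∑ i, b i ^ Fintype.card ι) / Fintype.card ι := by rw [← mul_sum, inv_mul_eq_div]

lemma prod_fin_two_mul_neg_one_pow_succ {R M : Type*} [Monoid R] [HasDistribNeg R] [CommMonoid M]
    (g : R → M) (ℓ : ℕ) :
    ∏ i : Fin (2 * ℓ), g ((-1) ^ (i.val + 1)) = (g (-1) * g 1) ^ ℓ := by
  rw [Fin.prod_univ_eq_prod_range (fun i => g ((-1) ^ (i + 1)))]
  induction ℓ with
  | zero => simp
  | succ ℓ ih =>
    rw [Nat.mul_succ, prod_range_succ, prod_range_succ, ih, pow_succ _ ℓ, mul_assoc]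
    simp [pow_succ, pow_mul]

section CharacterSums

variable {α ι R : Type*} [Ring R] [Fintype ι] [DecidableEq ι] (s : Finset α) (F : α → R)

def charSum (ψ : AddChar R ℂ) : ℂ := ∑ x ∈ s, ψ (F x)

def solutions [DecidableEq R] (c : ι → R) (v : R) : Finset (ι → α) :=
  {x ∈ Fintype.piFinset fun _ => s | ∑ i, c i * F (x i) = v}

lemma prod_charSum_mulShift (ψ : AddChar R ℂ) (c : ι → R) :
    ∏ i, charSum s F (ψ.mulShift (c i)) =
      ∑ x ∈ Fintype.piFinset (fun _ => s), ψ (∑ i, c i * F (x i)) := by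
  simp only [charSum, AddChar.mulShift_apply, prod_univ_sum, AddChar.map_sum_eq_prod]

variable [Fintype R]

lemma charSum_inv (ψ : AddChar R ℂ) : charSum s F ψ⁻¹ = conj (charSum s F ψ) := by
  simp only [charSum, map_sum, AddChar.inv_apply, AddChar.map_neg_eq_conj]

omit [Fintype ι] [DecidableEq ι] in
lemma sum_mulShift_of_isUnit {M : Type*} [AddCommMonoid M] (g : AddChar R ℂ → M) {u : R}
    (hu : IsUnit u) : ∑ ψ : AddChar R ℂ, g (ψ.mulShift u) = ∑ ψ, g ψ := by
  obtain ⟨u, rfl⟩ := hu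
  refine Fintype.sum_equiv ⟨(·.mulShift u), (·.mulShift ↑u⁻¹), fun ψ => ?_, fun ψ => ?_⟩ _ _
    fun _ => rfl
  all_goals simp [AddChar.mulShift_mulShift, AddChar.mulShift_one]

variable [DecidableEq R]

lemma card_mul_card_solutions (c : ι → R) (v : R) :
    (Fintype.card R : ℂ) * #(solutions s F c v) =
      ∑ ψ : AddChar R ℂ, (∏ i, charSum s F (ψ.mulShift (c i))) * ψ (-v) := by
  symm
  calc ∑ ψ : AddChar R ℂ, (∏ i, charSum s F (ψ.mulShift (c i))) * ψ (-v)
      = ∑ x ∈ Fintype.piFinset (fun _ => s), ∑ ψ : AddChar R ℂ,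
          ψ (∑ i, c i * F (x i) - v) := by
        rw [sum_comm]
        simp only [prod_charSum_mulShift, sum_mul, sub_eq_add_neg, AddChar.map_add_eq_mul]
    _ = (Fintype.card R : ℂ) * #(solutions s F c v) := by
        simp only [AddChar.sum_apply_eq_ite, sub_eq_zero, solutions, natCast_card_filter,
          mul_sum, mul_ite, mul_one, mul_zero]

lemma card_mul_card_solutions_le_sum_norm_charSum_pow [Nonempty ι] (c : ι → R)
    (hc : ∀ i, IsUnit (c i)) (v : R) :
    (Fintype.card R : ℝ) * #(solutions s F c v) ≤
      ∑ ψ : AddChar R ℂ, ‖charSum s F ψ‖ ^ Fintype.card ι := by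
  have hn : (Fintype.card ι : ℝ) ≠ 0 := Nat.cast_ne_zero.mpr Fintype.card_ne_zero
  calc (Fintype.card R : ℝ) * #(solutions s F c v)
      = ‖∑ ψ : AddChar R ℂ, (∏ i, charSum s F (ψ.mulShift (c i))) * ψ (-v)‖ := by
        rw [← card_mul_card_solutions, norm_mul, Complex.norm_natCast, Complex.norm_natCast]
    _ ≤ ∑ ψ : AddChar R ℂ, ∏ i, ‖charSum s F (ψ.mulShift (c i))‖ :=
        (norm_sum_le _ _).trans_eq <| by
          simp only [norm_mul, norm_prod, AddChar.norm_apply, mul_one]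
    _ ≤ ∑ ψ : AddChar R ℂ, (∑ i, ‖charSum s F (ψ.mulShift (c i))‖ ^ Fintype.card ι) /
          Fintype.card ι :=
        sum_le_sum fun ψ _ => prod_le_sum_pow_card_div_card _ fun _ => norm_nonneg _
    _ = (∑ i, ∑ ψ : AddChar R ℂ, ‖charSum s F (ψ.mulShift (c i))‖ ^ Fintype.card ι) /
          Fintype.card ι := by
        rw [← sum_div, sum_comm]
    _ = ∑ ψ : AddChar R ℂ, ‖charSum s F ψ‖ ^ Fintype.card ι := by
        rw [sum_congr rfl fun i _ =>
          sum_mulShift_of_isUnit (fun ψ => ‖charSum s F ψ‖ ^ Fintype.card ι) (hc i)]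
        rw [sum_const, card_univ, nsmul_eq_mul, mul_div_cancel_left₀ _ hn]

omit [Fintype ι] [DecidableEq ι] in
lemma card_mul_card_solutions_alternating (ℓ : ℕ) :
    (Fintype.card R : ℂ) * #(solutions s F (fun i : Fin (2 * ℓ) => (-1) ^ (i.val + 1)) 0) =
      ∑ ψ : AddChar R ℂ, (‖charSum s F ψ‖ ^ (2 * ℓ) : ℝ) := by
  rw [card_mul_card_solutions]
  push_cast
  refine sum_congr rfl fun ψ _ => ?_
  rw [neg_zero, AddChar.map_zero_eq_one, mul_one,
    prod_fin_two_mul_neg_one_pow_succ (fun r => charSum s F (ψ.mulShift r)),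
    ← AddChar.inv_mulShift, AddChar.mulShift_one, charSum_inv, Complex.conj_mul', pow_mul]

omit [Fintype ι] [DecidableEq ι] in
theorem card_solutions_le_card_solutions_alternating {ℓ : ℕ} (hℓ : 0 < ℓ)
    (c : Fin (2 * ℓ) → R) (hc : ∀ i, IsUnit (c i)) (v : R) :
    #(solutions s F c v) ≤ #(solutions s F (fun i : Fin (2 * ℓ) => (-1) ^ (i.val + 1)) 0) := by
  have : Nonempty (Fin (2 * ℓ)) := ⟨⟨0, by omega⟩⟩
  have hbound := card_mul_card_solutions_le_sum_norm_charSum_pow s F c hc v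
  have halt : (Fintype.card R : ℝ) *
      #(solutions s F (fun i : Fin (2 * ℓ) => (-1) ^ (i.val + 1)) 0) =
        ∑ ψ : AddChar R ℂ, ‖charSum s F ψ‖ ^ (2 * ℓ) := by
    exact_mod_cast card_mul_card_solutions_alternating s F ℓ
  rw [Fintype.card_fin, ← halt] at hbound
  exact_mod_cast le_of_mul_le_mul_left hbound (by simp [Fintype.card_pos])

end CharacterSums

lemma natCard_eq_card_solutions {α ι κ K : Type*} [Fintype ι] [DecidableEq ι] [Fintype κ]
    [Ring K] [DecidableEq K] {X : Set α} (hX : X.Finite) (f : κ → α → K) (a : ι → K)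
    (lam : κ → K) :
    Nat.card {x : ι → α // (∀ i, x i ∈ X) ∧ ∀ j, ∑ i, a i * f j (x i) = lam j} =
      #(solutions hX.toFinset (fun x j => f j x) (fun i _ => a i) lam) := by
  rw [← Nat.card_eq_finsetCard]
  refine Nat.card_congr (Equiv.subtypeEquivRight fun x => ?_)
  simp [solutions, funext_iff, Finset.sum_apply]

theorem stmt_0_general (q t m ℓ : ℕ) (hq : q.Prime) (hℓ : 0 < ℓ)
    (X : Set (Fin t → ZMod q)) (f : Fin m → (Fin t → ZMod q) → ZMod q)
    (σ : Fin (2 * ℓ) → ZMod q) (hσ : ∀ i, σ i ≠ 0) (lam : Fin m → ZMod q) :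
    Nat.card {x : Fin (2 * ℓ) → (Fin t → ZMod q) //
        (∀ i, x i ∈ X) ∧ ∀ j, ∑ i, σ i * f j (x i) = lam j} ≤
    Nat.card {x : Fin (2 * ℓ) → (Fin t → ZMod q) //
        (∀ i, x i ∈ X) ∧ ∀ j, ∑ i : Fin (2 * ℓ), (-1 : ZMod q) ^ (i.val + 1) * f j (x i) = 0} := by
  have := Fact.mk hq
  have hX := Set.toFinite X
  rw [natCard_eq_card_solutions hX, natCard_eq_card_solutions hX]
  exact card_solutions_le_card_solutions_alternating _ _ hℓ _
    (fun i => Pi.isUnit_iff.mpr fun _ => (hσ i).isUnit) _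

theorem stmt_0 (q t m ℓ : ℕ) (hq : q.Prime) (ht : 0 < t) (hm : 0 < m) (hℓ : 0 < ℓ)
    (X : Set (Fin t → ZMod q)) (f : Fin m → (Fin t → ZMod q) → ZMod q)
    (σ : Fin (2 * ℓ) → ZMod q) (hσ : ∀ i, σ i ≠ 0) (lam : Fin m → ZMod q) :
    Nat.card {x : Fin (2 * ℓ) → (Fin t → ZMod q) //
        (∀ i, x i ∈ X) ∧ ∀ j, ∑ i, σ i * f j (x i) = lam j} ≤
    Nat.card {x : Fin (2 * ℓ) → (Fin t → ZMod q) //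
        (∀ i, x i ∈ X) ∧ ∀ j, ∑ i : Fin (2 * ℓ), (-1 : ZMod q) ^ (i.val + 1) * f j (x i) = 0} :=
  stmt_0_general q t m ℓ hq hℓ X f σ hσ lam
end

section
/- Let q be prime, k, r, V positive integers with 1 ≤ m < k, r ≥ k(k+1)/2, and suppose V satisfies q^{1/m} ≪ V < q^{1/m}/r. Assume the main conjecture bound J_{r,k}(V) ≤ (1 + V^{r - k(k+1)/2}) V^{r+o(1)} for the integer Vinogradov system. Then the number J_{r,k}(V;q) of solutions of the congruence system v_1^j+⋯+v_r^j ≡ v_{r+1}^j+⋯+v_{2r}^j (mod q), j = 1,...,k, with 1 ≤ v_i ≤ V, satisfies J_{r,k}(V;q) ≤ V^{2r - km + m(m-1)/2 + o(1)}. -/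
/-!
Write a solution of the congruences as `φ(v) - φ(w) = q μ`, where `φ` is the vector of the first
`k` power sums. Since `1 ≤ vᵢ ≤ V`, the `j`-th entry of `φ(v) - φ(w)` is at most `r V ^ j` in
absolute value, so `q > (r V) ^ m` forces `μⱼ = 0` for `j ≤ m` and `|μⱼ| ≤ r V ^ (j - m)` beyond:
`μ` ranges over `≪ V ^ ((k - m) (k - m + 1) / 2)` vectors. For a fixed shift `μ`, the number of
solutions of `φ(v) = φ(w) + q μ` is `∑ N(b) N(b - q μ) ≤ ∑ N(b) ^ 2 = J_{r,k}(V)`, where `N` counts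
the fibres of `φ` on the box. The exponent `(k - m) (k - m + 1) / 2 + 2 r - k (k + 1) / 2` supplied
by the main conjecture is `2 r - k m + m (m - 1) / 2`.
-/

/-- The number of integer solutions of the Vinogradov system
`v₁^j + ⋯ + v_r^j = v_{r+1}^j + ⋯ + v_{2r}^j`, `j = 1, …, k`, with `1 ≤ vᵢ ≤ V`. -/
noncomputable def Jint (r k V : ℕ) : ℕ :=
  Nat.card {vw : (Fin r → ℤ) × (Fin r → ℤ) //
    (∀ i, 1 ≤ vw.1 i ∧ vw.1 i ≤ (V : ℤ)) ∧ (∀ i, 1 ≤ vw.2 i ∧ vw.2 i ≤ (V : ℤ)) ∧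
    (∀ j ∈ Finset.Icc 1 k, ∑ i, (vw.1 i) ^ j = ∑ i, (vw.2 i) ^ j)}

/-- The number of solutions of the corresponding congruence system modulo `q`. -/
noncomputable def Jcong (r k V q : ℕ) : ℕ :=
  Nat.card {vw : (Fin r → ℤ) × (Fin r → ℤ) //
    (∀ i, 1 ≤ vw.1 i ∧ vw.1 i ≤ (V : ℤ)) ∧ (∀ i, 1 ≤ vw.2 i ∧ vw.2 i ≤ (V : ℤ)) ∧
    (∀ j ∈ Finset.Icc 1 k, (q : ℤ) ∣ (∑ i, (vw.1 i) ^ j - ∑ i, (vw.2 i) ^ j))}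

open Finset

section ShiftedCollisions

variable {α G : Type*} [AddCommGroup G] [DecidableEq G] (s : Finset α) (f : α → G)

lemma card_filter_eq_add_eq_sum_mul (μ : G) :
    #{p ∈ s ×ˢ s | f p.1 = f p.2 + μ} =
      ∑ b ∈ s.image f, #{a ∈ s | f a = b} * #{a ∈ s | f a = b - μ} := by
  have inner : ∀ a ∈ s, #{b ∈ s | f a = f b + μ} = #{b ∈ s | f b = f a - μ} := fun a _ => by
    congr 1
    exact filter_congr fun b _ => by rw [eq_sub_iff_add_eq, eq_comm]
  rw [card_filter, sum_product]
  simp only [← card_filter]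
  rw [sum_congr rfl inner, sum_comp (fun b => #{a ∈ s | f a = b - μ}) f]
  simp only [smul_eq_mul]

lemma sum_card_fiber_sub_sq_le (μ : G) :
    ∑ b ∈ s.image f, #{a ∈ s | f a = b - μ} ^ 2 ≤ ∑ b ∈ s.image f, #{a ∈ s | f a = b} ^ 2 := by
  rw [← sum_image (g := (· - μ)) (f := fun b => #{a ∈ s | f a = b} ^ 2)
    fun _ _ _ _ h => sub_left_inj.mp h]
  refine sum_le_sum_of_ne_zero fun b _ hb => ?_
  obtain ⟨a, ha⟩ := card_pos.mp (Nat.pos_of_ne_zero (pow_ne_zero_iff two_ne_zero |>.mp hb))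
  exact mem_image.mpr ⟨a, (mem_filter.mp ha).1, (mem_filter.mp ha).2⟩

-- With `N b = #{a ∈ s | f a = b}`: `2 N(b) N(b - μ) ≤ N(b) ^ 2 + N(b - μ) ^ 2`, and the shifted
-- squares sum to at most the unshifted ones.
lemma card_filter_eq_add_le (μ : G) :
    #{p ∈ s ×ˢ s | f p.1 = f p.2 + μ} ≤ #{p ∈ s ×ˢ s | f p.1 = f p.2} := by
  have h₀ := card_filter_eq_add_eq_sum_mul s f 0
  simp only [add_zero, sub_zero] at h₀
  rw [card_filter_eq_add_eq_sum_mul, h₀]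
  have amgm : 2 * ∑ b ∈ s.image f, #{a ∈ s | f a = b} * #{a ∈ s | f a = b - μ} ≤
      ∑ b ∈ s.image f, #{a ∈ s | f a = b} ^ 2 + ∑ b ∈ s.image f, #{a ∈ s | f a = b - μ} ^ 2 := by
    rw [mul_sum, ← sum_add_distrib]
    exact sum_le_sum fun b _ => by rw [← mul_assoc]; exact two_mul_le_add_sq _ _
  have := sum_card_fiber_sub_sq_le s f μ
  simp only [sq] at amgm this
  omega

lemma card_filter_sub_mem_le (Λ : Finset G) :
    #{p ∈ s ×ˢ s | f p.1 - f p.2 ∈ Λ} ≤ #Λ * #{p ∈ s ×ˢ s | f p.1 = f p.2} := by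
  classical
  calc #{p ∈ s ×ˢ s | f p.1 - f p.2 ∈ Λ}
      ≤ #(Λ.biUnion fun μ => {p ∈ s ×ˢ s | f p.1 = f p.2 + μ}) := by
        refine card_le_card fun p hp => ?_
        obtain ⟨hp, hΛ⟩ := mem_filter.mp hp
        exact mem_biUnion.mpr ⟨_, hΛ, mem_filter.mpr ⟨hp, (add_sub_cancel _ _).symm⟩⟩
    _ ≤ #Λ * #{p ∈ s ×ˢ s | f p.1 = f p.2} :=
        card_biUnion_le_card_mul _ _ _ fun μ _ => card_filter_eq_add_le s f μ

end ShiftedCollisions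

lemma Nat.card_subtype_eq_card_filter {α : Type*} (s : Finset α) (P : α → Prop) [DecidablePred P]
    (h : ∀ x, P x → x ∈ s) : Nat.card {x // P x} = #{x ∈ s | P x} := by
  rw [← Nat.card_eq_finsetCard]
  exact Nat.card_congr <| Equiv.subtypeEquivRight fun x => by
    rw [mem_filter]; exact ⟨fun hx => ⟨h x hx, hx⟩, And.right⟩

lemma forall_mem_Icc_one_iff_forall_fin {k : ℕ} (P : ℕ → Prop) :
    (∀ j ∈ Icc 1 k, P j) ↔ ∀ j : Fin k, P (j + 1) := by
  refine ⟨fun h j => h _ (mem_Icc.mpr ⟨Nat.le_add_left 1 j, j.isLt⟩), fun h j hj => ?_⟩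
  obtain ⟨hj₁, hjk⟩ := mem_Icc.mp hj
  simpa [Nat.sub_add_cancel hj₁] using h ⟨j - 1, by omega⟩

lemma Int.abs_ediv_le_of_dvd {q r V m n : ℕ} {d : ℤ} (hd : (q : ℤ) ∣ d)
    (hdn : |d| ≤ r * (V : ℤ) ^ n) (hr : 0 < r) (hV : 0 < V) (hm : 1 ≤ m)
    (hq : (r * V) ^ m < q) : |d / q| ≤ r * (V : ℤ) ^ (n - m) := by
  obtain ⟨t, rfl⟩ := hd
  have hq' : ((r : ℤ) * V) ^ m < q := by exact_mod_cast hq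
  have hq₀ : (0 : ℤ) < q := lt_of_le_of_lt (by positivity) hq'
  rw [Int.mul_ediv_cancel_left _ hq₀.ne']
  rcases eq_or_ne t 0 with rfl | ht
  · simp only [abs_zero]; positivity
  have ht₁ : 1 ≤ |t| := Int.one_le_abs ht
  rw [abs_mul, abs_of_pos hq₀] at hdn
  have hV₁ : (1 : ℤ) ≤ V := by exact_mod_cast hV
  have hr₁ : (1 : ℤ) ≤ r := by exact_mod_cast hr
  -- otherwise `q ≤ |q t| ≤ r V ^ n ≤ (r V) ^ m < q`
  have hmn : m ≤ n := by
    by_contra! hnm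
    have : (r : ℤ) * V ^ n ≤ (r * V) ^ m :=
      calc (r : ℤ) * V ^ n ≤ r ^ m * V ^ m :=
            mul_le_mul (le_self_pow₀ hr₁ (by omega)) (pow_le_pow_right₀ hV₁ hnm.le)
              (by positivity) (by positivity)
        _ = (r * V) ^ m := (mul_pow _ _ _).symm
    nlinarith
  have hVm : (V : ℤ) ^ m < q :=
    lt_of_le_of_lt
      (pow_le_pow_left₀ (by positivity) (le_mul_of_one_le_left (by positivity) hr₁) m) hq'
  rw [← Nat.sub_add_cancel hmn, pow_add] at hdn
  refine le_of_lt (lt_of_mul_lt_mul_right (a := (V : ℤ) ^ m) ?_ (by positivity))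
  nlinarith

namespace Vinogradov

noncomputable def box (r V : ℕ) : Finset (Fin r → ℤ) := Fintype.piFinset fun _ => Icc 1 (V : ℤ)

lemma mem_box {r V : ℕ} {v : Fin r → ℤ} : v ∈ box r V ↔ ∀ i, 1 ≤ v i ∧ v i ≤ V := by
  simp only [box, Fintype.mem_piFinset, mem_Icc]

def powerSums (k : ℕ) {r : ℕ} (v : Fin r → ℤ) : Fin k → ℤ := fun j => ∑ i, v i ^ (j + 1 : ℕ)

lemma powerSums_nonneg {k r V : ℕ} {v : Fin r → ℤ} (hv : v ∈ box r V) (j : Fin k) :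
    0 ≤ powerSums k v j :=
  sum_nonneg fun i _ => pow_nonneg (zero_le_one.trans (mem_box.mp hv i).1) _

lemma powerSums_le {k r V : ℕ} {v : Fin r → ℤ} (hv : v ∈ box r V) (j : Fin k) :
    powerSums k v j ≤ r * (V : ℤ) ^ (j + 1 : ℕ) := by
  calc powerSums k v j ≤ ∑ _i : Fin r, (V : ℤ) ^ (j + 1 : ℕ) :=
        sum_le_sum fun i _ => pow_le_pow_left₀ (zero_le_one.trans (mem_box.mp hv i).1)
          (mem_box.mp hv i).2 _
    _ = r * (V : ℤ) ^ (j + 1 : ℕ) := by simp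

lemma abs_powerSums_sub_le {k r V : ℕ} {v w : Fin r → ℤ} (hv : v ∈ box r V) (hw : w ∈ box r V)
    (j : Fin k) : |powerSums k v j - powerSums k w j| ≤ r * (V : ℤ) ^ (j + 1 : ℕ) :=
  abs_sub_le_of_nonneg_of_le (powerSums_nonneg hv j) (powerSums_le hv j)
    (powerSums_nonneg hw j) (powerSums_le hw j)

lemma Jint_eq_card (r k V : ℕ) :
    Jint r k V = #{p ∈ box r V ×ˢ box r V | powerSums k p.1 = powerSums k p.2} := by
  rw [Jint, Nat.card_subtype_eq_card_filter _ _
    fun p hp => mem_product.mpr ⟨mem_box.mpr hp.1, mem_box.mpr hp.2.1⟩]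
  refine congrArg card (filter_congr fun p hp => ?_)
  rw [forall_mem_Icc_one_iff_forall_fin, funext_iff, mem_product, mem_box, mem_box] at *
  exact ⟨fun h => h.2.2, fun h => ⟨hp.1, hp.2, h⟩⟩

lemma Jcong_eq_card (r k V q : ℕ) :
    Jcong r k V q = #{p ∈ box r V ×ˢ box r V |
      ∀ j, (q : ℤ) ∣ powerSums k p.1 j - powerSums k p.2 j} := by
  rw [Jcong, Nat.card_subtype_eq_card_filter _ _
    fun p hp => mem_product.mpr ⟨mem_box.mpr hp.1, mem_box.mpr hp.2.1⟩]
  refine congrArg card (filter_congr fun p hp => ?_)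
  rw [forall_mem_Icc_one_iff_forall_fin, mem_product, mem_box, mem_box] at *
  exact ⟨fun h => h.2.2, fun h => ⟨hp.1, hp.2, h⟩⟩

/-- Contains `(powerSums k v - powerSums k w) / q` for `v, w ∈ box r V` when `(r V) ^ m < q`. -/
noncomputable def shiftBox (k r m V : ℕ) : Finset (Fin k → ℤ) :=
  Fintype.piFinset fun j : Fin k => Icc (-(r * (V : ℤ) ^ (j + 1 - m))) (r * (V : ℤ) ^ (j + 1 - m))

lemma card_shiftBox_le {k r m V : ℕ} (hr : 0 < r) (hV : 0 < V) :
    #(shiftBox k r m V) ≤ (3 * r) ^ k * V ^ (∑ j : Fin k, (j + 1 - m)) := by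
  have hIcc : ∀ L : ℕ, 0 < L → #(Icc (-(L : ℤ)) L) ≤ 3 * L := fun L hL => by
    rw [Int.card_Icc]; omega
  calc #(shiftBox k r m V)
      = ∏ j : Fin k, #(Icc (-((r * V ^ (j + 1 - m) : ℕ) : ℤ)) (r * V ^ (j + 1 - m) : ℕ)) := by
        rw [shiftBox, Fintype.card_piFinset]; push_cast; rfl
    _ ≤ ∏ j : Fin k, 3 * (r * V ^ (j + 1 - m)) :=
        prod_le_prod' fun j _ => hIcc _ (by positivity)
    _ = (3 * r) ^ k * V ^ (∑ j : Fin k, (j + 1 - m)) := by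
        simp only [← mul_assoc, mul_pow, prod_mul_distrib, prod_const, card_univ, Fintype.card_fin,
          prod_pow_eq_pow_sum]

lemma powerSums_sub_mem_image_shiftBox {k r m V q : ℕ} {v w : Fin r → ℤ} (hv : v ∈ box r V)
    (hw : w ∈ box r V) (hr : 0 < r) (hV : 0 < V) (hm : 1 ≤ m) (hq : (r * V) ^ m < q)
    (hdvd : ∀ j, (q : ℤ) ∣ powerSums k v j - powerSums k w j) :
    powerSums k v - powerSums k w ∈ (shiftBox k r m V).image ((q : ℤ) • ·) := by
  refine mem_image.mpr ⟨fun j => (powerSums k v j - powerSums k w j) / q, ?_, ?_⟩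
  · exact Fintype.mem_piFinset.mpr fun j => mem_Icc.mpr <| abs_le.mp <|
      Int.abs_ediv_le_of_dvd (hdvd j) (abs_powerSums_sub_le hv hw j) hr hV hm hq
  · funext j
    exact Int.mul_ediv_cancel' (hdvd j)

theorem Jcong_le {k r m V q : ℕ} (hr : 0 < r) (hV : 0 < V) (hm : 1 ≤ m)
    (hq : (r * V) ^ m < q) :
    Jcong r k V q ≤ (3 * r) ^ k * V ^ (∑ j : Fin k, (j + 1 - m)) * Jint r k V := by
  set s := box r V ×ˢ box r V
  calc Jcong r k V q
      = #{p ∈ s | ∀ j, (q : ℤ) ∣ powerSums k p.1 j - powerSums k p.2 j} := Jcong_eq_card r k V q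
    _ ≤ #{p ∈ s | powerSums k p.1 - powerSums k p.2 ∈ (shiftBox k r m V).image ((q : ℤ) • ·)} :=
        card_le_card fun p hp => by
          obtain ⟨hps, hdvd⟩ := mem_filter.mp hp
          obtain ⟨hv, hw⟩ := mem_product.mp hps
          exact mem_filter.mpr ⟨hps, powerSums_sub_mem_image_shiftBox hv hw hr hV hm hq hdvd⟩
    _ ≤ #((shiftBox k r m V).image ((q : ℤ) • ·)) * Jint r k V := by
        rw [Jint_eq_card]; exact card_filter_sub_mem_le _ _ _
    _ ≤ (3 * r) ^ k * V ^ (∑ j : Fin k, (j + 1 - m)) * Jint r k V :=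
        Nat.mul_le_mul_right _ (card_image_le.trans (card_shiftBox_le hr hV))

end Vinogradov

lemma two_mul_sum_fin_sub_eq (k m : ℕ) :
    2 * ∑ j : Fin k, (j + 1 - m) = (k - m) * (k - m + 1) := by
  induction k with
  | zero => simp
  | succ k ih =>
    rw [Fin.sum_univ_castSucc]
    simp only [Fin.val_castSucc, Fin.val_last]
    rw [mul_add, ih]
    rcases Nat.lt_or_ge k m with hkm | hkm
    · simp [Nat.sub_eq_zero_of_le hkm.le, Nat.sub_eq_zero_of_le hkm]
    · obtain ⟨t, rfl⟩ := Nat.exists_eq_add_of_le hkm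
      simp only [Nat.add_sub_cancel_left, add_assoc, Nat.add_sub_cancel_left]
      ring

lemma one_add_rpow_le_two_mul_rpow {x a : ℝ} (hx : 1 ≤ x) (ha : 0 ≤ a) :
    1 + x ^ a ≤ 2 * x ^ a := by
  linarith [Real.one_le_rpow hx ha]

lemma pow_lt_of_lt_rpow_one_div {x y : ℝ} {m : ℕ} (hx : 0 ≤ x) (hy : 0 ≤ y) (hm : 1 ≤ m)
    (h : x < y ^ ((1 : ℝ) / m)) : x ^ m < y := by
  rw [one_div, Real.lt_rpow_inv_iff_of_pos hx hy (by positivity), Real.rpow_natCast] at h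
  exact h

open Vinogradov in
theorem stmt_2_general (k r m : ℕ) (hm : 1 ≤ m) (hmk : m < k)
    (hr : k * (k + 1) / 2 ≤ r)
    (hmain : ∀ ε : ℝ, 0 < ε → ∃ C : ℝ, 0 < C ∧ ∀ V : ℕ, 0 < V →
      (Jint r k V : ℝ) ≤ C * (1 + (V : ℝ) ^ ((r : ℝ) - k * (k + 1) / 2)) * (V : ℝ) ^ ((r : ℝ) + ε))
    (c : ℝ) :
    ∀ ε : ℝ, 0 < ε → ∃ C : ℝ, 0 < C ∧ ∀ q V : ℕ, q.Prime → 0 < V →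
      c * (q : ℝ) ^ ((1 : ℝ) / m) ≤ (V : ℝ) → (V : ℝ) < (q : ℝ) ^ ((1 : ℝ) / m) / r →
      (Jcong r k V q : ℝ) ≤
        C * (V : ℝ) ^ (2 * (r : ℝ) - k * m + m * (m - 1) / 2 + ε) := by
  intro ε hε
  obtain ⟨C, hC, hJint⟩ := hmain ε hε
  have hkk : k * (k + 1) ≤ 2 * r := by
    have := (Nat.even_mul_succ_self k).two_dvd
    omega
  have hr₀ : 0 < r := by nlinarith
  refine ⟨2 * C * (3 * r) ^ k, by positivity, fun q V _ hV _ hVq => ?_⟩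
  have hV₁ : (1 : ℝ) ≤ V := by exact_mod_cast hV
  have hq : (r * V) ^ m < q := by
    have := pow_lt_of_lt_rpow_one_div (by positivity) (by positivity) hm
      ((lt_div_iff₀' (by positivity)).mp hVq)
    exact_mod_cast this
  have hexp : 0 ≤ (r : ℝ) - k * (k + 1) / 2 := by
    have : (k : ℝ) * (k + 1) ≤ 2 * r := by exact_mod_cast hkk
    linarith
  set D := ∑ j : Fin k, (j + 1 - m)
  have hD : 2 * (D : ℝ) = ((k : ℝ) - m) * ((k : ℝ) - m + 1) := by
    rw [← Nat.cast_sub hmk.le]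
    exact_mod_cast two_mul_sum_fin_sub_eq k m
  calc (Jcong r k V q : ℝ)
      ≤ (3 * r) ^ k * (V : ℝ) ^ D * Jint r k V := by exact_mod_cast Jcong_le hr₀ hV hm hq
    _ ≤ (3 * r) ^ k * (V : ℝ) ^ D *
        (C * (2 * (V : ℝ) ^ ((r : ℝ) - k * (k + 1) / 2)) * (V : ℝ) ^ ((r : ℝ) + ε)) := by
        gcongr
        exact (hJint V hV).trans (by gcongr; exact one_add_rpow_le_two_mul_rpow hV₁ hexp)
    _ = 2 * C * (3 * r) ^ k * (V : ℝ) ^ ((D : ℝ) + ((r : ℝ) - k * (k + 1) / 2) + (r + ε)) := by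
        have hV₀ : (0 : ℝ) < V := by positivity
        rw [Real.rpow_add hV₀ (D + ((r : ℝ) - k * (k + 1) / 2)), Real.rpow_add hV₀ (D : ℝ),
          Real.rpow_natCast]
        ring
    _ = 2 * C * (3 * r) ^ k * (V : ℝ) ^ (2 * (r : ℝ) - k * m + m * (m - 1) / 2 + ε) := by
        congr 2
        linear_combination hD / 2

theorem stmt_2 (k r m : ℕ) (hk : 0 < k) (hm : 1 ≤ m) (hmk : m < k)
    (hr : k * (k + 1) / 2 ≤ r)
    (hmain : ∀ ε : ℝ, 0 < ε → ∃ C : ℝ, 0 < C ∧ ∀ V : ℕ, 0 < V →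
      (Jint r k V : ℝ) ≤ C * (1 + (V : ℝ) ^ ((r : ℝ) - k * (k + 1) / 2)) * (V : ℝ) ^ ((r : ℝ) + ε))
    (c : ℝ) (hc : 0 < c) :
    ∀ ε : ℝ, 0 < ε → ∃ C : ℝ, 0 < C ∧ ∀ q V : ℕ, q.Prime → 0 < V →
      c * (q : ℝ) ^ ((1 : ℝ) / m) ≤ (V : ℝ) → (V : ℝ) < (q : ℝ) ^ ((1 : ℝ) / m) / r →
      (Jcong r k V q : ℝ) ≤
        C * (V : ℝ) ^ (2 * (r : ℝ) - k * m + m * (m - 1) / 2 + ε) :=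
  stmt_2_general k r m hm hmk hr hmain c
end

section
/- Let q be prime and let M, N, U be integers with NU ≤ q and 1 ≤ U ≤ N. Then the number of quadruples (n_1, n_2, u_1, u_2) with M < n_1, n_2 ≤ M+N, 1 ≤ u_1, u_2 ≤ U, and n_1 u_1 ≡ n_2 u_2 (mod q), is O(NU log q). -/
/-!
Fix `u₁, u₂ ≤ U` and put `g = gcd u₁ u₂`. For `n₁, n₂` in an interval of length `N`, the value
`n₁ u₁ - n₂ u₂` lies in an interval of length `< 2q`, so it takes at most two values divisible
by `q`. For each such value `n₁` determines `n₂`, and the admissible `n₁` are congruent modulo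
`u₂ / g` (symmetrically for `n₂` modulo `u₁ / g`), so there are at most
`N g / max u₁ u₂ + 1` of them. Summing over `u₁, u₂` gives
`2N ∑ gcd(u₁, u₂) / max(u₁, u₂) + 2U²`, and bounding `gcd(u₁, u₂)` by the sum of the common
divisors `d ≤ U` turns the double sum into `∑_{d ≤ U} 2U / d ≤ 2U (1 + log U)`.
-/

open Finset

theorem card_sub_one_mul_le_of_dvd_sub {S : Finset ℤ} {a b v : ℤ} (hv : 0 < v) (hab : a ≤ b)
    (hS : S ⊆ Icc a b) (hdvd : ∀ x ∈ S, ∀ y ∈ S, v ∣ x - y) : (#S - 1 : ℤ) * v ≤ b - a := by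
  have hmaps : Set.MapsTo (fun x => (x - a) / v) S (Icc 0 ((b - a) / v)) := by
    intro x hx
    obtain ⟨hax, hxb⟩ := mem_Icc.mp (hS hx)
    exact mem_Icc.mpr ⟨Int.ediv_nonneg (by omega) hv.le, Int.ediv_le_ediv hv (by omega)⟩
  have hinj : Set.InjOn (fun x => (x - a) / v) S := by
    intro x hx y hy (hxy : (x - a) / v = (y - a) / v)
    have hmod : (x - a) % v = (y - a) % v :=
      Int.ModEq.eq (Int.modEq_iff_dvd.mpr (by simpa using hdvd y hy x hx))
    have hx' := Int.mul_ediv_add_emod (x - a) v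
    have hy' := Int.mul_ediv_add_emod (y - a) v
    rw [hxy, hmod] at hx'
    linarith
  have hcard := card_le_card_of_injOn _ hmaps hinj
  rw [Int.card_Icc] at hcard
  have hquot : 0 ≤ (b - a) / v := Int.ediv_nonneg (by omega) hv.le
  calc (#S - 1 : ℤ) * v ≤ (b - a) / v * v := by gcongr; omega
    _ ≤ b - a := Int.ediv_mul_le _ hv.ne'

theorem card_filter_mul_sub_mul_eq_le_div_right {a b : ℤ} (hab : a ≤ b) {u₁ u₂ : ℕ} (hu₂ : 0 < u₂)
    (s : ℤ) :
    (#{p ∈ Icc a b ×ˢ Icc a b | p.1 * u₁ - p.2 * u₂ = s} : ℝ) ≤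
      (b - a) * Nat.gcd u₁ u₂ / u₂ + 1 := by
  set F := {p ∈ Icc a b ×ˢ Icc a b | p.1 * (u₁ : ℤ) - p.2 * u₂ = s}
  set g := Nat.gcd u₁ u₂
  have hg : 0 < g := Nat.gcd_pos_of_pos_right _ hu₂
  set w₁ := u₁ / g
  set w₂ := u₂ / g
  have hu₁w : u₁ = g * w₁ := (Nat.mul_div_cancel' (Nat.gcd_dvd_left u₁ u₂)).symm
  have hu₂w : u₂ = g * w₂ := (Nat.mul_div_cancel' (Nat.gcd_dvd_right u₁ u₂)).symm
  have hw₂ : 0 < w₂ := Nat.div_pos (Nat.gcd_le_right _ hu₂) hg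
  have hcop : IsCoprime (w₂ : ℤ) w₁ :=
    Nat.isCoprime_iff_coprime.mpr (Nat.coprime_div_gcd_div_gcd hg).symm
  have hinj : Set.InjOn Prod.fst (F : Set (ℤ × ℤ)) := by
    rintro ⟨x, y⟩ hp ⟨x', y'⟩ hp' (rfl : x = x')
    simp only [F, mem_coe, mem_filter] at hp hp'
    have : y * (u₂ : ℤ) = y' * u₂ := by linarith [hp.2, hp'.2]
    rw [mul_right_cancel₀ (by exact_mod_cast hu₂.ne') this]
  have hsub : F.image Prod.fst ⊆ Icc a b := by
    intro x hx
    obtain ⟨p, hp, rfl⟩ := mem_image.mp hx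
    exact (mem_product.mp (mem_filter.mp hp).1).1
  have hdvd : ∀ x ∈ F.image Prod.fst, ∀ x' ∈ F.image Prod.fst, (w₂ : ℤ) ∣ x - x' := by
    intro x hx x' hx'
    obtain ⟨⟨x, y⟩, hp, rfl⟩ := mem_image.mp hx
    obtain ⟨⟨x', y'⟩, hp', rfl⟩ := mem_image.mp hx'
    have he : (g : ℤ) * (w₁ * (x - x')) = g * (w₂ * (y - y')) := by
      have h := (mem_filter.mp hp).2
      have h' := (mem_filter.mp hp').2
      rw [hu₁w, hu₂w] at h h'
      push_cast at h h'
      linear_combination h - h'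
    have he' := mul_left_cancel₀ (by exact_mod_cast hg.ne') he
    exact hcop.dvd_of_dvd_mul_left ⟨y - y', he'⟩
  have key := card_sub_one_mul_le_of_dvd_sub (by exact_mod_cast hw₂) hab hsub hdvd
  rw [card_image_of_injOn hinj] at key
  have key' : ((#F : ℝ) - 1) * w₂ ≤ b - a := by exact_mod_cast key
  have hw : (b - a : ℝ) * g / u₂ = (b - a) / w₂ := by
    rw [hu₂w]; push_cast; field_simp
  rw [hw, ← sub_le_iff_le_add, le_div_iff₀ (by exact_mod_cast hw₂)]
  exact key'

theorem card_filter_mul_sub_mul_eq_le {a b : ℤ} (hab : a ≤ b) {u₁ u₂ : ℕ} (hu₁ : 0 < u₁)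
    (hu₂ : 0 < u₂) (s : ℤ) :
    (#{p ∈ Icc a b ×ˢ Icc a b | p.1 * u₁ - p.2 * u₂ = s} : ℝ) ≤
      (b - a) * Nat.gcd u₁ u₂ / (max u₁ u₂ : ℕ) + 1 := by
  rcases le_total u₁ u₂ with h | h
  · rw [max_eq_right h]
    exact card_filter_mul_sub_mul_eq_le_div_right hab hu₂ s
  · have hswap : #{p ∈ Icc a b ×ˢ Icc a b | p.1 * (u₁ : ℤ) - p.2 * u₂ = s} =
        #{p ∈ Icc a b ×ˢ Icc a b | p.1 * (u₂ : ℤ) - p.2 * u₁ = -s} := by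
      refine card_nbij' Prod.swap Prod.swap ?_ ?_ (fun _ _ => rfl) (fun _ _ => rfl) <;>
      · rintro ⟨x, y⟩ hp
        simp only [mem_coe, mem_filter, mem_product, Prod.swap_prod_mk] at hp ⊢
        exact ⟨hp.1.symm, by linarith [hp.2]⟩
    rw [hswap, max_eq_left h, Nat.gcd_comm]
    exact card_filter_mul_sub_mul_eq_le_div_right hab hu₁ (-s)

theorem card_filter_dvd_mul_sub_mul_le {q : ℕ} (hq : 0 < q) {a b : ℤ} (hab : a ≤ b) {u₁ u₂ : ℕ}
    (hu₁ : 0 < u₁) (hu₂ : 0 < u₂) (hlen : (b - a) * (u₁ + u₂) < 2 * q) :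
    (#{p ∈ Icc a b ×ˢ Icc a b | (q : ℤ) ∣ p.1 * u₁ - p.2 * u₂} : ℝ) ≤
      2 * ((b - a) * Nat.gcd u₁ u₂ / (max u₁ u₂ : ℕ) + 1) := by
  set T := {s ∈ Icc (a * u₁ - b * u₂) (b * u₁ - a * u₂) | (q : ℤ) ∣ s}
  have hmaps : ∀ p ∈ {p ∈ Icc a b ×ˢ Icc a b | (q : ℤ) ∣ p.1 * u₁ - p.2 * u₂},
      p.1 * (u₁ : ℤ) - p.2 * u₂ ∈ T := by
    intro p hp
    simp only [mem_filter, mem_product, mem_Icc] at hp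
    obtain ⟨⟨⟨ha₁, hb₁⟩, ha₂, hb₂⟩, hdvd⟩ := hp
    have hu₁' : (0 : ℤ) ≤ u₁ := by positivity
    have hu₂' : (0 : ℤ) ≤ u₂ := by positivity
    refine mem_filter.mpr ⟨mem_Icc.mpr ⟨?_, ?_⟩, hdvd⟩ <;> nlinarith
  have hT : #T ≤ 2 := by
    have hsub : T ⊆ Icc (a * u₁ - b * u₂) (b * u₁ - a * u₂) := filter_subset _ _
    have h := card_sub_one_mul_le_of_dvd_sub (by exact_mod_cast hq) (by nlinarith) hsub
      (fun x hx y hy => dvd_sub (mem_filter.mp hx).2 (mem_filter.mp hy).2)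
    have : (#T - 1 : ℤ) < 2 :=
      lt_of_mul_lt_mul_right (h.trans_lt (by linear_combination hlen)) (by positivity)
    omega
  have hB : 0 ≤ (b - a : ℝ) * Nat.gcd u₁ u₂ / (max u₁ u₂ : ℕ) + 1 := by
    have : (0 : ℝ) ≤ b - a := by exact_mod_cast sub_nonneg.mpr hab
    positivity
  rw [card_eq_sum_card_fiberwise hmaps, Nat.cast_sum]
  calc _ ≤ ∑ _s ∈ T, ((b - a : ℝ) * Nat.gcd u₁ u₂ / (max u₁ u₂ : ℕ) + 1) := by
        refine sum_le_sum fun s _ => le_trans ?_ (card_filter_mul_sub_mul_eq_le hab hu₁ hu₂ s)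
        refine Nat.cast_le.mpr (card_le_card fun p hp => ?_)
        simp only [mem_filter] at hp ⊢
        exact ⟨hp.1.1, hp.2⟩
    _ ≤ 2 * ((b - a : ℝ) * Nat.gcd u₁ u₂ / (max u₁ u₂ : ℕ) + 1) := by
        rw [sum_const, nsmul_eq_mul]
        exact mul_le_mul_of_nonneg_right (by exact_mod_cast hT) hB

theorem sum_product_apply_max_le {α M : Type*} [LinearOrder α] [AddCommMonoid M] [PartialOrder M]
    [IsOrderedAddMonoid M] (s : Finset α) {h : α → M} (hh : ∀ a ∈ s, 0 ≤ h a) :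
    ∑ p ∈ s ×ˢ s, h (max p.1 p.2) ≤ 2 • ∑ a ∈ s, #{b ∈ s | b ≤ a} • h a := by
  have hterm : ∀ p ∈ s ×ˢ s, h (max p.1 p.2) ≤
      (if p.2 ≤ p.1 then h p.1 else 0) + (if p.1 ≤ p.2 then h p.2 else 0) := by
    rintro ⟨a, b⟩ hp
    obtain ⟨ha, hb⟩ := mem_product.mp hp
    rcases le_total b a with hba | hab
    · rw [max_eq_left hba, if_pos hba]
      exact le_add_of_nonneg_right (by split_ifs <;> simp [hh b hb])
    · rw [max_eq_right hab, if_pos hab]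
      exact le_add_of_nonneg_left (by split_ifs <;> simp [hh a ha])
  have hcount : ∀ a ∈ s, ∑ b ∈ s, (if b ≤ a then h a else 0) = #{b ∈ s | b ≤ a} • h a :=
    fun a _ => by rw [← sum_filter, sum_const]
  calc _ ≤ ∑ p ∈ s ×ˢ s, ((if p.2 ≤ p.1 then h p.1 else 0) + (if p.1 ≤ p.2 then h p.2 else 0)) :=
        sum_le_sum hterm
    _ = 2 • ∑ a ∈ s, #{b ∈ s | b ≤ a} • h a := by
        rw [sum_add_distrib, sum_product, sum_product_right, two_nsmul, sum_congr rfl hcount]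

theorem sum_filter_dvd_div_max_le (U : ℕ) {d : ℕ} (hd : 0 < d) :
    ∑ p ∈ Icc 1 U ×ˢ Icc 1 U with d ∣ p.1 ∧ d ∣ p.2, (d : ℝ) / (max p.1 p.2 : ℕ) ≤ 2 * U / d := by
  have hmult (a : ℕ) : #{x ∈ Icc 1 a | d ∣ x} = a / d := by
    rw [← Nat.Ioc_filter_dvd_card_eq_div, ← Icc_add_one_left_eq_Ioc, zero_add]
  set s := {x ∈ Icc 1 U | d ∣ x}
  have hcount : ∀ a ∈ s, #{b ∈ s | b ≤ a} • ((d : ℝ) / a) = 1 := by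
    intro a ha
    obtain ⟨⟨ha₁, haU⟩, hda⟩ := by simpa only [s, mem_filter, mem_Icc] using ha
    have hs : {b ∈ s | b ≤ a} = {x ∈ Icc 1 a | d ∣ x} := by
      ext b; simp only [s, mem_filter, mem_Icc]; omega
    rw [hs, hmult, nsmul_eq_mul, Nat.cast_div hda (by positivity)]
    field_simp
  rw [filter_product (fun x => d ∣ x) (fun x => d ∣ x)]
  calc _ ≤ 2 • ∑ a ∈ s, #{b ∈ s | b ≤ a} • ((d : ℝ) / a) :=
        sum_product_apply_max_le s (h := fun m : ℕ => (d : ℝ) / m) fun _ _ => by positivity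
    _ = 2 * (U / d : ℕ) := by rw [sum_congr rfl hcount, sum_const, hmult]; simp [mul_comm]
    _ ≤ 2 * U / d := by rw [mul_div_assoc]; gcongr; exact Nat.cast_div_le

theorem sum_gcd_div_max_le (U : ℕ) :
    ∑ p ∈ Icc 1 U ×ˢ Icc 1 U, (Nat.gcd p.1 p.2 : ℝ) / (max p.1 p.2 : ℕ) ≤
      2 * U * (1 + Real.log U) := by
  have hterm : ∀ p ∈ Icc 1 U ×ˢ Icc 1 U, (Nat.gcd p.1 p.2 : ℝ) / (max p.1 p.2 : ℕ) ≤
      ∑ d ∈ Icc 1 U, if d ∣ p.1 ∧ d ∣ p.2 then (d : ℝ) / (max p.1 p.2 : ℕ) else 0 := by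
    rintro ⟨u₁, u₂⟩ hp
    obtain ⟨⟨hu₁, hu₁U⟩, -⟩ := by simpa only [mem_product, mem_Icc] using hp
    have hg : Nat.gcd u₁ u₂ ∈ Icc 1 U :=
      mem_Icc.mpr ⟨Nat.gcd_pos_of_pos_left _ hu₁, (Nat.gcd_le_left _ hu₁).trans hu₁U⟩
    refine le_of_eq_of_le ?_ (single_le_sum (fun d _ => ?_) hg)
    · rw [if_pos ⟨Nat.gcd_dvd_left _ _, Nat.gcd_dvd_right _ _⟩]
    · split_ifs <;> positivity
  calc _ ≤ ∑ p ∈ Icc 1 U ×ˢ Icc 1 U, ∑ d ∈ Icc 1 U,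
        if d ∣ p.1 ∧ d ∣ p.2 then (d : ℝ) / (max p.1 p.2 : ℕ) else 0 := sum_le_sum hterm
    _ = ∑ d ∈ Icc 1 U, ∑ p ∈ Icc 1 U ×ˢ Icc 1 U with d ∣ p.1 ∧ d ∣ p.2,
        (d : ℝ) / (max p.1 p.2 : ℕ) := by
        rw [sum_comm]; exact sum_congr rfl fun d _ => (sum_filter _ _).symm
    _ ≤ ∑ d ∈ Icc 1 U, 2 * (U : ℝ) / d :=
        sum_le_sum fun d hd => sum_filter_dvd_div_max_le U (mem_Icc.mp hd).1
    _ = 2 * U * harmonic U := by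
        rw [harmonic_eq_sum_Icc, Rat.cast_sum, mul_sum]
        simp [div_eq_mul_inv]
    _ ≤ 2 * U * (1 + Real.log U) :=
        mul_le_mul_of_nonneg_left (harmonic_le_one_add_log U) (by positivity)

theorem natCard_eq_sum_card_filter_dvd (M K q : ℤ) (U : ℕ) :
    Nat.card {x : ℤ × ℤ × ℤ × ℤ //
        (M < x.1 ∧ x.1 ≤ K) ∧ (M < x.2.1 ∧ x.2.1 ≤ K) ∧
        (1 ≤ x.2.2.1 ∧ x.2.2.1 ≤ (U : ℤ)) ∧ (1 ≤ x.2.2.2 ∧ x.2.2.2 ≤ (U : ℤ)) ∧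
        q ∣ (x.1 * x.2.2.1 - x.2.1 * x.2.2.2)} =
      ∑ u ∈ Icc 1 U ×ˢ Icc 1 U,
        #{p ∈ Icc (M + 1) K ×ˢ Icc (M + 1) K | q ∣ p.1 * u.1 - p.2 * u.2} := by
  rw [← card_sigma, ← Set.ncard_coe_finset]
  refine (Nat.card_coe_set_eq _).trans (Set.ncard_congr
    (fun x _ => ⟨(x.2.2.1.toNat, x.2.2.2.toNat), (x.1, x.2.1)⟩) ?_ ?_ ?_)
  · rintro ⟨n₁, n₂, u₁, u₂⟩ ⟨hn₁, hn₂, hu₁, hu₂, hq⟩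
    dsimp only at hn₁ hn₂ hu₁ hu₂ hq
    simp only [coe_sigma, Set.mem_sigma_iff, mem_coe, mem_product, mem_Icc, mem_filter]
    refine ⟨by omega, ⟨by omega, by omega⟩, by rwa [Int.toNat_of_nonneg (by omega),
      Int.toNat_of_nonneg (by omega)]⟩
  · rintro ⟨n₁, n₂, u₁, u₂⟩ ⟨n₁', n₂', u₁', u₂'⟩ ⟨-, -, hu₁, hu₂, -⟩ ⟨-, -, hu₁', hu₂', -⟩ h
    dsimp only at hu₁ hu₂ hu₁' hu₂'
    simp only [Sigma.mk.injEq, Prod.mk.injEq, heq_eq_eq] at h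
    simp only [Prod.mk.injEq]
    omega
  · rintro ⟨⟨u₁, u₂⟩, n₁, n₂⟩ h
    simp only [coe_sigma, Set.mem_sigma_iff, mem_coe, mem_product, mem_Icc, mem_filter] at h
    refine ⟨(n₁, n₂, u₁, u₂), ?_, by simp⟩
    refine ⟨?_, ?_, ?_, ?_, h.2.2⟩ <;> dsimp only <;> omega

theorem card_filter_dvd_mul_sub_mul_le_of_mul_le {q N U : ℕ} (hNU : N * U ≤ q) (hN : 1 ≤ N)
    (M : ℤ) {u₁ u₂ : ℕ} (hu₁ : u₁ ∈ Icc 1 U) (hu₂ : u₂ ∈ Icc 1 U) :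
    (#{p ∈ Icc (M + 1) (M + N) ×ˢ Icc (M + 1) (M + N) | (q : ℤ) ∣ p.1 * u₁ - p.2 * u₂} : ℝ) ≤
      2 * (N * ((Nat.gcd u₁ u₂ : ℝ) / (max u₁ u₂ : ℕ)) + 1) := by
  obtain ⟨hu₁, hu₁U⟩ := mem_Icc.mp hu₁
  obtain ⟨hu₂, hu₂U⟩ := mem_Icc.mp hu₂
  have hlen : (N - 1 : ℤ) * (u₁ + u₂) < 2 * q := by
    have : (N : ℤ) * U ≤ q := by exact_mod_cast hNU
    nlinarith
  have hq : 0 < q := by nlinarith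
  refine (card_filter_dvd_mul_sub_mul_le hq (by omega) hu₁ hu₂ (by simpa using hlen)).trans ?_
  rw [mul_div_assoc]
  gcongr
  push_cast; linarith

theorem stmt_4 : ∃ C : ℝ, 0 < C ∧ ∀ (q N U : ℕ) (M : ℤ), q.Prime →
    N * U ≤ q → 1 ≤ U → U ≤ N →
    (Nat.card {x : ℤ × ℤ × ℤ × ℤ //
        (M < x.1 ∧ x.1 ≤ M + N) ∧ (M < x.2.1 ∧ x.2.1 ≤ M + N) ∧
        (1 ≤ x.2.2.1 ∧ x.2.2.1 ≤ (U : ℤ)) ∧ (1 ≤ x.2.2.2 ∧ x.2.2.2 ≤ (U : ℤ)) ∧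
        (q : ℤ) ∣ (x.1 * x.2.2.1 - x.2.1 * x.2.2.2)} : ℝ) ≤
      C * N * U * Real.log q := by
  refine ⟨16, by norm_num, fun q N U M hq hNU hU hUN => ?_⟩
  have hN : 1 ≤ N := hU.trans hUN
  have hUNr : (U : ℝ) ≤ N := by exact_mod_cast hUN
  have hlogU : Real.log U ≤ Real.log q := Real.log_le_log (by positivity)
    (by exact_mod_cast (Nat.le_mul_of_pos_left U hN).trans hNU)
  have hlogq : 1 / 2 < Real.log q := by
    have := Real.log_le_log (by norm_num) (by exact_mod_cast hq.two_le : (2 : ℝ) ≤ q)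
    linarith [Real.log_two_gt_d9]
  rw [natCard_eq_sum_card_filter_dvd, Nat.cast_sum]
  calc _ ≤ ∑ u ∈ Icc 1 U ×ˢ Icc 1 U, 2 * (N * ((Nat.gcd u.1 u.2 : ℝ) / (max u.1 u.2 : ℕ)) + 1) :=
        sum_le_sum fun u hu => card_filter_dvd_mul_sub_mul_le_of_mul_le hNU hN M
          (mem_product.mp hu).1 (mem_product.mp hu).2
    _ = 2 * N * ∑ u ∈ Icc 1 U ×ˢ Icc 1 U, (Nat.gcd u.1 u.2 : ℝ) / (max u.1 u.2 : ℕ) +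
        2 * U * U := by
        simp only [mul_add, sum_add_distrib, ← mul_sum, mul_one, sum_const, card_product,
          Nat.card_Icc, nsmul_eq_mul]
        push_cast; ring
    _ ≤ 2 * N * (2 * U * (1 + Real.log U)) + 2 * U * U := by
        gcongr; exact sum_gcd_div_max_le U
    _ ≤ 16 * N * U * Real.log q := by
        have hNU0 : (0 : ℝ) ≤ N * U := by positivity
        nlinarith [mul_le_mul_of_nonneg_left hlogU hNU0, mul_le_mul_of_nonneg_left hlogq.le hNU0,
          mul_le_mul_of_nonneg_left hUNr (by positivity : (0 : ℝ) ≤ U)]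
end

section
/- Let q be prime and let k ≥ 2 be an integer. Let M, N, U be integers with NU ≤ q and 1 ≤ U ≤ N. Then the number of quadruples (n_1, n_2, u_1, u_2) with M ≤ n_1, n_2 ≤ M+N, 1 ≤ u_1, u_2 ≤ U satisfying u_1^k ≡ u_2^k (mod q) and u_1^{k-1} n_1 ≡ u_2^{k-1} n_2 (mod q) is at most k·N·U (up to an absolute constant), i.e. I_{k,1}(N,U) ≪ NU. -/
/-! The map `(n₁, n₂, u₁, u₂) ↦ (n₁, u₁, u₂)` has fibres of size at most two: `u₂` is a unit
mod `q`, so the second congruence fixes `n₂` mod `q`, and an interval of length `N ≤ q` meets a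
residue class at most twice. In the image, reduction mod `q` is injective on `[1, U]` since
`U < q`, so for each `u₁` there are at most `k` values `u₂`, namely the `k`-th roots of `u₁ ^ k`
in `ZMod q`. Hence the count is at most `2 (N + 1) U k ≤ 4 k N U`. -/

open Finset

theorem ZMod.intCast_injOn_Ico (q : ℕ) (a : ℤ) :
    Set.InjOn (Int.cast : ℤ → ZMod q) (Set.Ico a (a + q)) := by
  intro x hx y hy hxy
  rw [ZMod.intCast_eq_intCast_iff_dvd_sub] at hxy
  have := Int.eq_zero_of_abs_lt_dvd hxy
    (abs_sub_lt_iff.mpr ⟨by linarith [hx.1, hy.2], by linarith [hx.2, hy.1]⟩)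
  linarith

theorem ZMod.intCast_ne_zero_of_pos_of_lt {q : ℕ} {u : ℤ} (h0 : 0 < u) (hq : u < q) :
    (u : ZMod q) ≠ 0 := by
  intro hu
  have := ZMod.intCast_injOn_Ico q 0 ⟨h0.le, by simpa using hq⟩ ⟨le_rfl, by simp; omega⟩
    (by simpa using hu)
  omega

theorem ZMod.injOn_intCast_prod_decide_Icc (q : ℕ) (a : ℤ) :
    Set.InjOn (fun n : ℤ => ((n : ZMod q), decide (a + q ≤ n))) (Set.Icc a (a + q)) := by
  intro x hx y hy hxy
  simp only [Prod.mk.injEq, decide_eq_decide] at hxy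
  obtain ⟨hcast, hside⟩ := hxy
  by_cases hx' : a + q ≤ x
  · have := hside.1 hx'
    linarith [hx.2, hy.2]
  · have := hside.not.1 hx'
    exact ZMod.intCast_injOn_Ico q a ⟨hx.1, by omega⟩ ⟨hy.1, by omega⟩ hcast

theorem card_filter_pow_eq_pow_le {ι R : Type*} [DecidableEq ι] [CommRing R] [IsDomain R]
    [DecidableEq R] (s : Finset ι) {f : ι → R} (hf : Set.InjOn f s) {k : ℕ} (hk : 0 < k) :
    #{p ∈ s ×ˢ s | f p.1 ^ k = f p.2 ^ k} ≤ #s * k := by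
  rw [mul_comm]
  refine card_le_mul_card_image_of_maps_to (f := Prod.fst)
    (fun p hp => (mem_product.1 (mem_filter.1 hp).1).1) k fun i _ => ?_
  calc #{p ∈ {p ∈ s ×ˢ s | f p.1 ^ k = f p.2 ^ k} | p.1 = i}
      ≤ #(Polynomial.nthRootsFinset k (f i ^ k)) := by
        refine card_le_card_of_injOn (fun p => f p.2) (fun p hp => ?_) fun p hp p' hp' h => ?_
        · simp only [coe_filter, mem_filter, mem_product, Set.mem_ofPred_eq] at hp
          rw [mem_coe, Polynomial.mem_nthRootsFinset hk, ← hp.2, hp.1.2]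
        · simp only [coe_filter, mem_filter, mem_product, Set.mem_ofPred_eq] at hp hp'
          exact Prod.ext (hp.2.trans hp'.2.symm) (hf hp.1.1.2 hp'.1.1.2 h)
    _ ≤ k := by
        classical
        rw [Polynomial.nthRootsFinset_def]
        exact (Multiset.toFinset_card_le _).trans (Polynomial.card_nthRoots k _)

noncomputable def congruenceQuadruples (q k N U : ℕ) (M : ℤ) : Finset (ℤ × ℤ × ℤ × ℤ) :=
  {x ∈ Icc M (M + N) ×ˢ Icc M (M + N) ×ˢ Icc 1 (U : ℤ) ×ˢ Icc 1 (U : ℤ) |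
    (x.2.2.1 : ZMod q) ^ k = (x.2.2.2 : ZMod q) ^ k ∧
      (x.2.2.1 : ZMod q) ^ (k - 1) * x.1 = (x.2.2.2 : ZMod q) ^ (k - 1) * x.2.1}

theorem natCard_eq_card_congruenceQuadruples (q k N U : ℕ) (M : ℤ) :
    Nat.card {x : ℤ × ℤ × ℤ × ℤ //
        (M ≤ x.1 ∧ x.1 ≤ M + N) ∧ (M ≤ x.2.1 ∧ x.2.1 ≤ M + N) ∧
        (1 ≤ x.2.2.1 ∧ x.2.2.1 ≤ (U : ℤ)) ∧ (1 ≤ x.2.2.2 ∧ x.2.2.2 ≤ (U : ℤ)) ∧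
        (q : ℤ) ∣ (x.2.2.1 ^ k - x.2.2.2 ^ k) ∧
        (q : ℤ) ∣ (x.2.2.1 ^ (k - 1) * x.1 - x.2.2.2 ^ (k - 1) * x.2.1)} =
      #(congruenceQuadruples q k N U M) := by
  rw [← Nat.card_eq_finsetCard]
  refine Nat.card_congr (Equiv.subtypeEquivRight fun x => ?_)
  simp only [congruenceQuadruples, mem_filter, mem_product, mem_Icc,
    ← ZMod.intCast_zmod_eq_zero_iff_dvd, Int.cast_sub, Int.cast_mul, Int.cast_pow, sub_eq_zero]
  tauto

theorem card_congruenceQuadruples_le {q k N U : ℕ} (M : ℤ) (hq : q.Prime) (hk : 0 < k)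
    (hN : N ≤ q) (hU : U < q) :
    #(congruenceQuadruples q k N U M) ≤ 2 * ((N + 1) * (U * k)) := by
  have := Fact.mk hq
  let pairs := {p ∈ Icc 1 (U : ℤ) ×ˢ Icc 1 (U : ℤ) | (p.1 : ZMod q) ^ k = (p.2 : ZMod q) ^ k}
  have hpairs : #pairs ≤ U * k := by
    have hinj : Set.InjOn (Int.cast : ℤ → ZMod q) (Icc 1 (U : ℤ)) :=
      (ZMod.intCast_injOn_Ico q 1).mono fun u hu => by
        simp only [coe_Icc, Set.mem_Icc] at hu; exact ⟨hu.1, by omega⟩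
    simpa using card_filter_pow_eq_pow_le (Icc 1 (U : ℤ)) hinj hk
  have hmaps : ∀ x ∈ congruenceQuadruples q k N U M,
      (x.1, x.2.2.1, x.2.2.2) ∈ Icc M (M + N) ×ˢ pairs := by
    intro x hx
    simp only [congruenceQuadruples, mem_filter, mem_product] at hx
    simp only [pairs, mem_product, mem_filter]
    exact ⟨hx.1.1, ⟨hx.1.2.2.1, hx.1.2.2.2⟩, hx.2.1⟩
  have hfiber : ∀ b ∈ Icc M (M + N) ×ˢ pairs,
      #{x ∈ congruenceQuadruples q k N U M | (x.1, x.2.2.1, x.2.2.2) = b} ≤ 2 := by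
    intro b _
    -- in a fibre `n₂` is fixed mod `q`, hence by the side of `M + q` it lies on
    refine (card_le_card_of_injOn (fun x => decide (M + q ≤ x.2.1)) (t := univ)
      (fun _ _ => mem_coe.2 (mem_univ _)) ?_).trans (by simp)
    intro x hx y hy hxy
    simp only [congruenceQuadruples, coe_filter, mem_filter, mem_product, mem_Icc,
      Set.mem_ofPred_eq] at hx hy
    obtain ⟨⟨⟨_, hx2, _, hxu2⟩, -, hxeq⟩, rfl⟩ := hx
    obtain ⟨⟨⟨_, hy2, _, _⟩, -, hyeq⟩, hyb⟩ := hy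
    simp only [Prod.mk.injEq] at hyb
    obtain ⟨h1, h3, h4⟩ := hyb
    have hu : ((x.2.2.2 : ℤ) : ZMod q) ^ (k - 1) ≠ 0 :=
      pow_ne_zero _ (ZMod.intCast_ne_zero_of_pos_of_lt (by omega) (by omega))
    have hcast : ((x.2.1 : ℤ) : ZMod q) = y.2.1 := by
      rw [h1, h3, h4] at hyeq
      exact mul_left_cancel₀ hu (hxeq.symm.trans hyeq)
    have h2 : x.2.1 = y.2.1 := ZMod.injOn_intCast_prod_decide_Icc q M
      ⟨hx2.1, by omega⟩ ⟨hy2.1, by omega⟩ (Prod.ext hcast hxy)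
    exact Prod.ext h1.symm (Prod.ext h2 (Prod.ext h3.symm h4.symm))
  calc #(congruenceQuadruples q k N U M)
      ≤ 2 * #(Icc M (M + N) ×ˢ pairs) := card_le_mul_card_image_of_maps_to hmaps 2 hfiber
    _ ≤ 2 * ((N + 1) * (U * k)) := by
      rw [card_product, Int.card_Icc, show M + N + 1 - M = ((N + 1 : ℕ) : ℤ) by push_cast; ring,
        Int.toNat_natCast]
      gcongr

theorem stmt_5 : ∃ C : ℝ, 0 < C ∧ ∀ (q k N U : ℕ) (M : ℤ), q.Prime → 2 ≤ k →
    N * U ≤ q → 1 ≤ U → U ≤ N →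
    (Nat.card {x : ℤ × ℤ × ℤ × ℤ //
        (M ≤ x.1 ∧ x.1 ≤ M + N) ∧ (M ≤ x.2.1 ∧ x.2.1 ≤ M + N) ∧
        (1 ≤ x.2.2.1 ∧ x.2.2.1 ≤ (U : ℤ)) ∧ (1 ≤ x.2.2.2 ∧ x.2.2.2 ≤ (U : ℤ)) ∧
        (q : ℤ) ∣ (x.2.2.1 ^ k - x.2.2.2 ^ k) ∧
        (q : ℤ) ∣ (x.2.2.1 ^ (k - 1) * x.1 - x.2.2.2 ^ (k - 1) * x.2.1)} : ℝ) ≤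
      C * k * N * U := by
  refine ⟨4, by norm_num, fun q k N U M hq hk hNU hU hUN => ?_⟩
  have hN : N ≤ q := (Nat.le_mul_of_pos_right N hU).trans hNU
  have hUq : U < q := by
    rcases hU.eq_or_lt with rfl | hU2
    · exact hq.one_lt
    · nlinarith
  have hbound : 2 * ((N + 1) * (U * k)) ≤ 4 * k * N * U := by
    nlinarith [Nat.mul_le_mul_right (U * k) (show N + 1 ≤ 2 * N by omega)]
  rw [natCard_eq_card_congruenceQuadruples]
  exact_mod_cast (card_congruenceQuadruples_le M hq (by omega) hN hUq).trans hbound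
end

section
/- Let q be a prime, ℓ ≥ 1 an integer, and k an integer with 2ℓ ≤ k. Suppose (n_1,...,n_{2ℓ}, u_1,...,u_{2ℓ}) is a solution to the congruence system n_1^j u_1^{k−j} + ⋯ + n_ℓ^j u_ℓ^{k−j} ≡ n_{ℓ+1}^j u_{ℓ+1}^{k−j} + ⋯ + n_{2ℓ}^j u_{2ℓ}^{k−j} (mod q) for all j = 0, 1, ..., 2ℓ−1, with all u_i not divisible by q. Then there exist indices r ≠ s in {1,...,2ℓ} with n_r u_s ≡ n_s u_r (mod q). -/
/-! Reduce modulo `q` and put `x_i = n_i / u_i`. The system says that the vector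
`c_i = ± u_i ^ k`, which has no zero entry, is killed by the transpose of the Vandermonde matrix
of the `x_i`, so two of the `x_i` coincide. -/

open Finset

theorem Matrix.exists_ne_eq_of_forall_sum_mul_pow_eq_zero {R : Type*} [CommRing R]
    [IsDomain R] {m : ℕ} {x c : Fin m → R} (hc : c ≠ 0)
    (h : ∀ j : Fin m, ∑ i, c i * x i ^ (j : ℕ) = 0) :
    ∃ r s, r ≠ s ∧ x r = x s := by
  obtain ⟨r, s, hx, hrs⟩ := Function.not_injective_iff.mp fun hinj =>
    hc (eq_zero_of_forall_pow_sum_mul_pow_eq_zero hinj h)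
  exact ⟨r, s, hrs, hx⟩

theorem pow_mul_pow_sub_eq_pow_mul_div_pow {K : Type*} [Field K] (a : K) {u : K} (hu : u ≠ 0)
    {j k : ℕ} (hjk : j ≤ k) : a ^ j * u ^ (k - j) = u ^ k * (a / u) ^ j := by
  rw [div_pow, pow_sub₀ _ hu hjk]
  field_simp

theorem ZMod.intCast_ne_zero_of_not_dvd {q : ℕ} {u : ℤ} (hu : ¬ (q : ℤ) ∣ u) :
    (u : ZMod q) ≠ 0 :=
  mt (intCast_zmod_eq_zero_iff_dvd u q).mp hu

theorem ZMod.dvd_mul_sub_mul_of_intCast_div_eq {q : ℕ} [Fact q.Prime] {a b u v : ℤ}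
    (hu : ¬ (q : ℤ) ∣ u) (hv : ¬ (q : ℤ) ∣ v) (h : (a / u : ZMod q) = b / v) :
    (q : ℤ) ∣ a * v - b * u := by
  rw [div_eq_div_iff (intCast_ne_zero_of_not_dvd hu) (intCast_ne_zero_of_not_dvd hv)] at h
  rw [← ZMod.intCast_zmod_eq_zero_iff_dvd]
  push_cast
  exact sub_eq_zero.mpr h

theorem stmt_7 (q ℓ k : ℕ) (hq : q.Prime) (hℓ : 1 ≤ ℓ) (hk : 2 * ℓ ≤ k)
    (n u : Fin (2 * ℓ) → ℤ) (hu : ∀ i, ¬ (q : ℤ) ∣ u i)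
    (hsys : ∀ j : ℕ, j < 2 * ℓ →
      (q : ℤ) ∣ ∑ i : Fin (2 * ℓ),
        (if (i : ℕ) < ℓ then (1 : ℤ) else -1) * (n i) ^ j * (u i) ^ (k - j)) :
    ∃ r s : Fin (2 * ℓ), r ≠ s ∧ (q : ℤ) ∣ (n r * u s - n s * u r) := by
  have : Fact q.Prime := ⟨hq⟩
  have hu0 i := ZMod.intCast_ne_zero_of_not_dvd (hu i)
  let c : Fin (2 * ℓ) → ZMod q := fun i =>
    (if (i : ℕ) < ℓ then 1 else -1) * (u i : ZMod q) ^ k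
  have hc : c ≠ 0 := fun h => by
    have h0 := congrFun h ⟨0, by omega⟩
    simp only [c, Pi.zero_apply, if_pos (by omega : 0 < ℓ), one_mul] at h0
    exact pow_ne_zero k (hu0 _) h0
  have hsum (j : Fin (2 * ℓ)) : ∑ i, c i * ((n i : ZMod q) / u i) ^ (j : ℕ) = 0 := by
    have h := (ZMod.intCast_zmod_eq_zero_iff_dvd _ q).mpr (hsys j j.isLt)
    push_cast at h
    rw [← h]
    refine sum_congr rfl fun i _ => ?_
    rw [mul_assoc _ ((n i : ZMod q) ^ (j : ℕ)),
      pow_mul_pow_sub_eq_pow_mul_div_pow _ (hu0 i) (j.isLt.le.trans hk), mul_assoc]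
  obtain ⟨r, s, hrs, hx⟩ := Matrix.exists_ne_eq_of_forall_sum_mul_pow_eq_zero hc hsum
  exact ⟨r, s, hrs, ZMod.dvd_mul_sub_mul_of_intCast_div_eq (hu r) (hu s) hx⟩
end

section
/- Let q be prime, M, N, U integers with NU ≤ q and 1 ≤ U ≤ N, and let ℓ ≥ 1, k be integers with 2ℓ ≤ k. Let I_{k,ℓ}(N,U) denote the number of tuples (n_1,...,n_{2ℓ}, u_1,...,u_{2ℓ}) with M < n_i ≤ M+N and 1 ≤ u_i ≤ U satisfying n_1^j u_1^{k−j} + ⋯ + n_ℓ^j u_ℓ^{k−j} ≡ n_{ℓ+1}^j u_{ℓ+1}^{k−j} + ⋯ + n_{2ℓ}^j u_{2ℓ}^{k−j} (mod q) for all j = 0,...,2ℓ−1. Then I_{k,ℓ}(N,U) ≪ (NU)^ℓ (log q)^{ℓ−1}, with an implied constant depending only on k and ℓ. -/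
/-!
Write `tᵢ = nᵢ / uᵢ` in `ZMod q` (each `uᵢ` is a unit since `U < q`). The congruences read
`∑ εᵢ uᵢ^k tᵢ^j = 0` for `j < 2ℓ`, so by Vandermonde the sum of `εᵢ uᵢ^k` over every class of
equal `tᵢ` vanishes; in particular no class is a singleton and there are `m ≤ ℓ` classes.
A solution is then determined by the partition, by `n` and `u` at the least index of each class
(where `u` is one of at most `k` roots of `X^k - c`, `c` fixed by the rest of the class sum) and
by `u` at the other indices (`n ≡ t u` with `N ≤ q` fixes `n`). This gives at most
`(2ℓ)^{2ℓ} (N k)^m U^{2ℓ - m} ≤ (2ℓ)^{2ℓ} k^ℓ (N U)^ℓ` solutions, since `U² ≤ N U`; the factor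
`(log q)^{ℓ-1}` is then only needed as a constant `≥ (log 2)^{ℓ-1}`.
-/

/-- `Icount k ℓ q N U M` is the number of tuples `(n₁,…,n_{2ℓ}, u₁,…,u_{2ℓ})` with
`M < nᵢ ≤ M + N`, `1 ≤ uᵢ ≤ U` satisfying
`n₁^j u₁^{k-j} + ⋯ + n_ℓ^j u_ℓ^{k-j} ≡ n_{ℓ+1}^j u_{ℓ+1}^{k-j} + ⋯ + n_{2ℓ}^j u_{2ℓ}^{k-j} (mod q)`
for all `j = 0, …, 2ℓ - 1`. -/
noncomputable def Icount (k ℓ q N U : ℕ) (M : ℤ) : ℕ :=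
  Nat.card {nu : (Fin (2 * ℓ) → ℤ) × (Fin (2 * ℓ) → ℤ) //
    (∀ i, M < nu.1 i ∧ nu.1 i ≤ M + N) ∧ (∀ i, 1 ≤ nu.2 i ∧ nu.2 i ≤ (U : ℤ)) ∧
    (∀ j : ℕ, j < 2 * ℓ →
      (q : ℤ) ∣ ∑ i : Fin (2 * ℓ),
        (if (i : ℕ) < ℓ then (1 : ℤ) else -1) * (nu.1 i) ^ j * (nu.2 i) ^ (k - j))}

open Finset Polynomial

section Vandermonde

variable {ι F : Type*} [Fintype ι]

theorem sum_mul_eval_eq_zero_of_sum_mul_pow_eq_zero [CommRing F] {w t : ι → F} {n : ℕ}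
    (h : ∀ j < n, ∑ i, w i * t i ^ j = 0) {g : F[X]} (hg : g.natDegree < n) :
    ∑ i, w i * g.eval (t i) = 0 := by
  calc ∑ i, w i * g.eval (t i)
      = ∑ j ∈ range (g.natDegree + 1), g.coeff j * ∑ i, w i * t i ^ j := by
        simp_rw [eval_eq_sum_range, mul_sum]
        rw [sum_comm]
        refine sum_congr rfl fun j _ => sum_congr rfl fun i _ => by ring
    _ = 0 := sum_eq_zero fun j hj => by
        rw [h j (by rw [mem_range] at hj; omega), mul_zero]

/-- The Lagrange polynomial vanishing at the other values of `t` isolates the class `t⁻¹ τ`. -/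
theorem sum_filter_eq_zero_of_sum_mul_pow_eq_zero [Field F] [DecidableEq F] {w t : ι → F}
    (h : ∀ j < Fintype.card ι, ∑ i, w i * t i ^ j = 0) (τ : F) :
    ∑ i with t i = τ, w i = 0 := by
  obtain hτ | ⟨i₀, hi₀⟩ := (univ.filter (t · = τ)).eq_empty_or_nonempty
  · rw [hτ, sum_empty]
  have hτ_mem : τ ∈ univ.image t := mem_image.2 ⟨i₀, mem_univ _, (mem_filter.1 hi₀).2⟩
  set g : F[X] := ∏ σ ∈ (univ.image t).erase τ, (X - C σ)
  have hg : g.natDegree < Fintype.card ι := by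
    rw [natDegree_prod_of_monic _ _ fun _ _ => monic_X_sub_C _]
    simp only [natDegree_X_sub_C, sum_const, smul_eq_mul, mul_one]
    exact (card_erase_lt_of_mem hτ_mem).trans_le card_image_le
  have hgτ : g.eval τ ≠ 0 := by
    simp only [g, eval_prod, eval_sub, eval_X, eval_C]
    exact prod_ne_zero_iff.2 fun σ hσ => sub_ne_zero.2 (ne_of_mem_erase hσ).symm
  have hg_eval (i : ι) : w i * g.eval (t i) = if t i = τ then w i * g.eval τ else 0 := by
    split_ifs with hi
    · rw [hi]
    · simp only [g, eval_prod, eval_sub, eval_X, eval_C]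
      rw [prod_eq_zero (mem_erase.2 ⟨hi, mem_image_of_mem t (mem_univ i)⟩) (sub_self _),
        mul_zero]
  have hsum := sum_mul_eval_eq_zero_of_sum_mul_pow_eq_zero h hg
  simp_rw [hg_eval, ← sum_filter, ← sum_mul] at hsum
  exact (mul_eq_zero.1 hsum).resolve_right hgτ

end Vandermonde

theorem card_filter_pow_eq_le {α R : Type*} [CommRing R] [IsDomain R] [DecidableEq R]
    {s : Finset α} {f : α → R} (hf : Set.InjOn f s) {k : ℕ} (hk : 0 < k) (a : R) :
    #{x ∈ s | f x ^ k = a} ≤ k := by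
  rw [← card_image_of_injOn (hf.mono (coe_subset.2 (filter_subset _ _)))]
  calc #((s.filter (f · ^ k = a)).image f) ≤ #(nthRootsFinset k a) :=
        card_le_card fun _ hy => by
          obtain ⟨x, hx, rfl⟩ := mem_image.1 hy
          exact (mem_nthRootsFinset hk a).2 (mem_filter.1 hx).2
    _ ≤ k := by
        rw [nthRootsFinset_def]
        exact (Multiset.toFinset_card_le _).trans (card_nthRoots k a)

section Rank

variable {α : Type*} [LinearOrder α] {s : Finset α} {x : α}

theorem card_filter_lt_lt_card (hx : x ∈ s) : #{y ∈ s | y < x} < #s :=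
  card_lt_card (filter_ssubset.2 ⟨x, hx, lt_irrefl x⟩)

theorem strictMonoOn_card_filter_lt (s : Finset α) :
    StrictMonoOn (fun x => #{y ∈ s | y < x}) s := fun x hx _ _ hxy =>
  card_lt_card <| (ssubset_iff_of_subset fun _ hy =>
      mem_filter.2 ⟨(mem_filter.1 hy).1, (mem_filter.1 hy).2.trans hxy⟩).2
    ⟨x, mem_filter.2 ⟨hx, hxy⟩, fun h => lt_irrefl x (mem_filter.1 h).2⟩

end Rank

theorem eq_of_intCast_eq_of_abs_sub_lt {q : ℕ} {a b : ℤ} (h : (a : ZMod q) = b)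
    (hab : |a - b| < q) : a = b :=
  sub_eq_zero.1 <|
    Int.eq_zero_of_abs_lt_dvd ((ZMod.intCast_eq_intCast_iff_dvd_sub _ _ _).1 h.symm) hab

section ClassMin

variable {ι α : Type*} [Fintype ι] [LinearOrder ι] [DecidableEq α] (t : ι → α)

def classMin (i : ι) : ι :=
  (univ.filter (t · = t i)).min' ⟨i, mem_filter.2 ⟨mem_univ i, rfl⟩⟩

theorem apply_classMin (i : ι) : t (classMin t i) = t i :=
  (mem_filter.1 (min'_mem (univ.filter (t · = t i)) _)).2

theorem classMin_le_of_apply_eq {i j : ι} (h : t j = t i) : classMin t i ≤ j :=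
  min'_le _ _ (mem_filter.2 ⟨mem_univ j, h⟩)

theorem classMin_eq_classMin_iff {i j : ι} : classMin t i = classMin t j ↔ t i = t j := by
  refine ⟨fun h => by rw [← apply_classMin t i, h, apply_classMin t j], fun h => ?_⟩
  exact le_antisymm (classMin_le_of_apply_eq t (by rw [apply_classMin t j, h]))
    (classMin_le_of_apply_eq t (by rw [apply_classMin t i, h]))

theorem classMin_classMin (i : ι) : classMin t (classMin t i) = classMin t i :=
  (classMin_eq_classMin_iff t).2 (apply_classMin t i)

end ClassMin

theorem two_mul_card_fixedPoints_le {ι : Type*} [Fintype ι] [DecidableEq ι] {p : ι → ι}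
    (hp : ∀ i, p (p i) = p i) (hfib : ∀ r, p r = r → ∃ j ≠ r, p j = r) :
    2 * #{r | p r = r} ≤ Fintype.card ι := by
  calc 2 * #{r | p r = r} = ∑ r with p r = r, 2 := by rw [sum_const, smul_eq_mul, mul_comm]
    _ ≤ ∑ r with p r = r, #{i | p i = r} := sum_le_sum fun r hr => ?_
    _ = Fintype.card ι :=
        (card_eq_sum_card_fiberwise fun i _ => mem_filter.2 ⟨mem_univ _, hp i⟩).symm
  obtain ⟨j, hjr, hj⟩ := hfib r (mem_filter.1 hr).2
  rw [← card_pair hjr]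
  refine card_le_card fun x hx => ?_
  rcases mem_insert.1 hx with rfl | hx
  · simpa using hj
  · simpa [mem_singleton.1 hx] using (mem_filter.1 hr).2

theorem pow_mul_pow_sub_le {m ℓ k N U : ℕ} (hm : m ≤ ℓ) (hUN : U ≤ N) (hk : 0 < k) :
    (N * k) ^ m * U ^ (2 * ℓ - m) ≤ k ^ ℓ * (N * U) ^ ℓ := by
  obtain ⟨e, rfl⟩ := Nat.exists_eq_add_of_le hm
  have hUU : U * U ≤ k * (N * U) :=
    (Nat.mul_le_mul_right U hUN).trans (Nat.le_mul_of_pos_left _ hk)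
  calc (N * k) ^ m * U ^ (2 * (m + e) - m)
      = k ^ m * (N * U) ^ m * (U * U) ^ e := by
        rw [show 2 * (m + e) - m = m + e + e by omega]; ring
    _ ≤ k ^ m * (N * U) ^ m * (k * (N * U)) ^ e := by gcongr
    _ = k ^ (m + e) * (N * U) ^ (m + e) := by ring

namespace Icount

abbrev Tuple (ℓ : ℕ) : Type := (Fin (2 * ℓ) → ℤ) × (Fin (2 * ℓ) → ℤ)

def sign (ℓ : ℕ) (i : Fin (2 * ℓ)) : ℤ := if (i : ℕ) < ℓ then 1 else -1

def IsSolution (k ℓ q N U : ℕ) (M : ℤ) (ν : Tuple ℓ) : Prop :=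
  (∀ i, M < ν.1 i ∧ ν.1 i ≤ M + N) ∧ (∀ i, 1 ≤ ν.2 i ∧ ν.2 i ≤ (U : ℤ)) ∧
    ∀ j < 2 * ℓ, (q : ℤ) ∣ ∑ i, sign ℓ i * ν.1 i ^ j * ν.2 i ^ (k - j)

instance (k ℓ q N U : ℕ) (M : ℤ) : DecidablePred (IsSolution k ℓ q N U M) := fun _ => by
  unfold IsSolution; infer_instance

noncomputable def solutions (k ℓ q N U : ℕ) (M : ℤ) : Finset (Tuple ℓ) :=
  {ν ∈ Fintype.piFinset (fun _ => Ioc M (M + N)) ×ˢ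
      Fintype.piFinset (fun _ => Icc 1 (U : ℤ)) | IsSolution k ℓ q N U M ν}

theorem eq_card_solutions (k ℓ q N U : ℕ) (M : ℤ) :
    Icount k ℓ q N U M = #(solutions k ℓ q N U M) := by
  rw [← Nat.card_eq_finsetCard]
  refine Nat.card_congr (Equiv.subtypeEquivRight fun ν => ?_)
  simp only [solutions, mem_filter, mem_product, Fintype.mem_piFinset, mem_Ioc, mem_Icc]
  exact ⟨fun h => ⟨⟨h.1, h.2.1⟩, h⟩, fun h => h.2⟩

variable {k ℓ q N U : ℕ} {M : ℤ} {ν ν' : Tuple ℓ}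

def slope (q : ℕ) [Fact q.Prime] (ν : Tuple ℓ) (i : Fin (2 * ℓ)) : ZMod q :=
  (ν.1 i : ZMod q) / (ν.2 i : ZMod q)

def weight (k q : ℕ) (ν : Tuple ℓ) (i : Fin (2 * ℓ)) : ZMod q :=
  (sign ℓ i : ZMod q) * (ν.2 i : ZMod q) ^ k

def shape (q : ℕ) [Fact q.Prime] (ν : Tuple ℓ) : Fin (2 * ℓ) → Fin (2 * ℓ) :=
  classMin (slope q ν)

noncomputable def powClass (k q U : ℕ) (x : ℤ) : Finset ℤ :=
  {v ∈ Icc 1 (U : ℤ) | (v : ZMod q) ^ k = (x : ZMod q) ^ k}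

noncomputable def powRank (k q U : ℕ) (x : ℤ) : ℕ := #{v ∈ powClass k q U x | v < x}

noncomputable def encode (k q U : ℕ) [Fact q.Prime] (ν : Tuple ℓ) (i : Fin (2 * ℓ)) :
    ℤ × ℤ :=
  if shape q ν i = i then (ν.1 i, powRank k q U (ν.2 i)) else (0, ν.2 i)

noncomputable def box {ι : Type*} [DecidableEq ι] (k N U : ℕ) (M : ℤ) (p : ι → ι)
    (i : ι) : Finset (ℤ × ℤ) :=
  if p i = i then Ioc M (M + N) ×ˢ Ico 0 (k : ℤ) else {0} ×ˢ Icc 1 (U : ℤ)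

theorem prod_card_box {ι : Type*} [Fintype ι] [DecidableEq ι] (p : ι → ι) :
    ∏ i, #(box k N U M p i) = (N * k) ^ #{i | p i = i} * U ^ #{i | ¬p i = i} := by
  simp only [box, apply_ite card, card_product, Int.card_Ioc, Int.card_Ico, card_singleton,
    Int.card_Icc]
  rw [prod_ite]
  simp

theorem injOn_intCast_Icc (hUq : U ≤ q) :
    Set.InjOn (Int.cast : ℤ → ZMod q) (Icc 1 (U : ℤ) : Set ℤ) := fun a ha b hb h => by
  simp only [coe_Icc, Set.mem_Icc] at ha hb
  exact eq_of_intCast_eq_of_abs_sub_lt h (abs_lt.2 ⟨by omega, by omega⟩)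

theorem powRank_lt [Fact q.Prime] (hUq : U ≤ q) (hk : 0 < k) {x : ℤ}
    (hx : x ∈ Icc 1 (U : ℤ)) : powRank k q U x < k :=
  (card_filter_lt_lt_card (s := powClass k q U x) (mem_filter.2 ⟨hx, rfl⟩)).trans_le
    (card_filter_pow_eq_le (injOn_intCast_Icc hUq) hk _)

theorem eq_of_powRank_eq {x y : ℤ} (hx : x ∈ Icc 1 (U : ℤ)) (hy : y ∈ Icc 1 (U : ℤ))
    (hxy : (x : ZMod q) ^ k = (y : ZMod q) ^ k) (h : powRank k q U x = powRank k q U y) :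
    x = y := by
  have hcls : powClass k q U y = powClass k q U x := by simp only [powClass, hxy]
  rw [powRank, powRank, hcls] at h
  exact (strictMonoOn_card_filter_lt (powClass k q U x)).injOn (mem_filter.2 ⟨hx, rfl⟩)
    (mem_filter.2 ⟨hy, hxy.symm⟩) h

theorem sign_ne_zero [Fact q.Prime] (i : Fin (2 * ℓ)) : (sign ℓ i : ZMod q) ≠ 0 := by
  unfold sign
  split_ifs <;> simp

namespace IsSolution

variable [Fact q.Prime]

theorem intCast_snd_ne_zero (hs : IsSolution k ℓ q N U M ν) (hUq : U < q) (i : Fin (2 * ℓ)) :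
    (ν.2 i : ZMod q) ≠ 0 := fun h => by
  have hi := hs.2.1 i
  have := eq_of_intCast_eq_of_abs_sub_lt (h.trans Int.cast_zero.symm)
    (by rw [sub_zero, abs_lt]; omega)
  omega

theorem sum_weight_mul_slope_pow (hs : IsSolution k ℓ q N U M ν) (hUq : U < q)
    (hk : 2 * ℓ ≤ k) {j : ℕ} (hj : j < 2 * ℓ) :
    ∑ i, weight k q ν i * slope q ν i ^ j = 0 := by
  have h := (ZMod.intCast_zmod_eq_zero_iff_dvd _ q).2 (hs.2.2 j hj)
  push_cast at h
  rw [← h]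
  refine sum_congr rfl fun i _ => ?_
  have hu := hs.intCast_snd_ne_zero hUq i
  rw [weight, slope, div_pow, ← pow_sub_mul_pow _ (hj.le.trans hk)]
  field_simp

theorem sum_weight_filter_slope_eq (hs : IsSolution k ℓ q N U M ν) (hUq : U < q)
    (hk : 2 * ℓ ≤ k) (τ : ZMod q) : ∑ i with slope q ν i = τ, weight k q ν i = 0 :=
  sum_filter_eq_zero_of_sum_mul_pow_eq_zero
    (fun _ hj => hs.sum_weight_mul_slope_pow hUq hk (by simpa using hj)) τ

theorem sum_weight_filter_shape_eq (hs : IsSolution k ℓ q N U M ν) (hUq : U < q)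
    (hk : 2 * ℓ ≤ k) (r : Fin (2 * ℓ)) :
    ∑ j with shape q ν j = shape q ν r, weight k q ν j = 0 := by
  simp_rw [shape, classMin_eq_classMin_iff]
  exact hs.sum_weight_filter_slope_eq hUq hk _

theorem exists_ne_shape_eq (hs : IsSolution k ℓ q N U M ν) (hUq : U < q) (hk : 2 * ℓ ≤ k)
    {r : Fin (2 * ℓ)} (hr : shape q ν r = r) : ∃ j ≠ r, shape q ν j = r := by
  by_contra! h
  have hsingle : ({j | shape q ν j = shape q ν r} : Finset (Fin (2 * ℓ))) = {r} :=
    eq_singleton_iff_unique_mem.2 ⟨mem_filter.2 ⟨mem_univ r, rfl⟩, fun j hj =>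
      by_contra fun hjr => h j hjr ((mem_filter.1 hj).2.trans hr)⟩
  have hsum := hs.sum_weight_filter_shape_eq hUq hk r
  rw [hsingle, sum_singleton] at hsum
  exact mul_ne_zero (sign_ne_zero r) (pow_ne_zero _ (hs.intCast_snd_ne_zero hUq r)) hsum

theorem encode_mem (hs : IsSolution k ℓ q N U M ν) (hUq : U ≤ q) (hk : 0 < k) :
    encode k q U ν ∈ Fintype.piFinset (box k N U M (shape q ν)) := by
  refine Fintype.mem_piFinset.2 fun i => ?_
  have hu : ν.2 i ∈ Icc 1 (U : ℤ) := mem_Icc.2 (hs.2.1 i)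
  unfold encode box
  split_ifs
  · exact mem_product.2 ⟨mem_Ioc.2 (hs.1 i),
      mem_Ico.2 ⟨Nat.cast_nonneg _, Nat.cast_lt.2 (powRank_lt hUq hk hu)⟩⟩
  · exact mem_product.2 ⟨mem_singleton_self 0, hu⟩

theorem weight_eq_of_snd_eq (hs : IsSolution k ℓ q N U M ν) (hs' : IsSolution k ℓ q N U M ν')
    (hUq : U < q) (hk : 2 * ℓ ≤ k) (hshape : shape q ν = shape q ν') {r : Fin (2 * ℓ)}
    (hsnd : ∀ j ≠ r, shape q ν j = shape q ν r → ν.2 j = ν'.2 j) :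
    weight k q ν r = weight k q ν' r := by
  have h := hs.sum_weight_filter_shape_eq hUq hk r
  have h' := hs'.sum_weight_filter_shape_eq hUq hk r
  rw [← hshape] at h'
  have hr : r ∈ ({j | shape q ν j = shape q ν r} : Finset _) :=
    mem_filter.2 ⟨mem_univ r, rfl⟩
  rw [← add_sum_erase _ _ hr] at h h'
  have htail : ∑ j ∈ ({j | shape q ν j = shape q ν r} : Finset _).erase r, weight k q ν j =
      ∑ j ∈ ({j | shape q ν j = shape q ν r} : Finset _).erase r, weight k q ν' j :=
    sum_congr rfl fun j hj => by
      obtain ⟨hjr, hj⟩ := mem_erase.1 hj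
      rw [weight, weight, hsnd j hjr (mem_filter.1 hj).2]
  linear_combination h - h' - htail

theorem eq_of_encode_eq (hs : IsSolution k ℓ q N U M ν) (hs' : IsSolution k ℓ q N U M ν')
    (hUq : U < q) (hNq : N ≤ q) (hk : 2 * ℓ ≤ k) (hshape : shape q ν = shape q ν')
    (henc : encode k q U ν = encode k q U ν') : ν = ν' := by
  have henc_at (i : Fin (2 * ℓ)) := congrFun henc i
  simp only [encode, ← hshape] at henc_at
  have hsnd_of_ne {i} (hi : shape q ν i ≠ i) : ν.2 i = ν'.2 i := by
    simpa [hi] using henc_at i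
  have hrep {r} (hr : shape q ν r = r) :
      ν.1 r = ν'.1 r ∧ powRank k q U (ν.2 r) = powRank k q U (ν'.2 r) := by
    simpa [hr] using henc_at r
  have hsnd (i : Fin (2 * ℓ)) : ν.2 i = ν'.2 i := by
    by_cases hi : shape q ν i = i
    · have hw := hs.weight_eq_of_snd_eq hs' hUq hk hshape fun j hji hj =>
        hsnd_of_ne (by rw [hj, hi]; exact hji.symm)
      exact eq_of_powRank_eq (mem_Icc.2 (hs.2.1 i)) (mem_Icc.2 (hs'.2.1 i))
        (mul_left_cancel₀ (sign_ne_zero i) hw) (hrep hi).2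
    · exact hsnd_of_ne hi
  have hslope (i : Fin (2 * ℓ)) : slope q ν i = slope q ν' i := by
    rw [← apply_classMin (slope q ν) i, ← apply_classMin (slope q ν') i]
    change slope q ν (shape q ν i) = slope q ν' (shape q ν' i)
    rw [← hshape, slope, slope, (hrep (r := shape q ν i) (classMin_classMin _ i)).1, hsnd]
  have hfst (i : Fin (2 * ℓ)) : ν.1 i = ν'.1 i := by
    have h := hslope i
    rw [slope, slope, hsnd i, div_left_inj' (hs'.intCast_snd_ne_zero hUq i)] at h
    have hi := hs.1 i
    have hi' := hs'.1 i
    exact eq_of_intCast_eq_of_abs_sub_lt h (abs_lt.2 ⟨by omega, by omega⟩)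
  exact Prod.ext (funext hfst) (funext hsnd)

end IsSolution

theorem card_filter_shape_eq_le [Fact q.Prime] (hUq : U < q) (hNq : N ≤ q) (hUN : U ≤ N)
    (hk : 2 * ℓ ≤ k) (hk0 : 0 < k) (p : Fin (2 * ℓ) → Fin (2 * ℓ)) :
    #{ν ∈ solutions k ℓ q N U M | shape q ν = p} ≤ k ^ ℓ * (N * U) ^ ℓ := by
  obtain hempty | ⟨ν₀, hν₀⟩ :=
    ({ν ∈ solutions k ℓ q N U M | shape q ν = p}).eq_empty_or_nonempty
  · simp [hempty]
  obtain ⟨hmem, rfl⟩ := mem_filter.1 hν₀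
  have hs₀ := (mem_filter.1 hmem).2
  have hm : #{i | shape q ν₀ i = i} ≤ ℓ := by
    have := two_mul_card_fixedPoints_le (p := shape q ν₀) (classMin_classMin _)
      fun r hr => hs₀.exists_ne_shape_eq hUq hk hr
    simp only [Fintype.card_fin] at this
    omega
  have hcompl : #{i | ¬shape q ν₀ i = i} = 2 * ℓ - #{i | shape q ν₀ i = i} := by
    have := card_filter_add_card_filter_not (s := univ) fun i => shape q ν₀ i = i
    rw [card_univ, Fintype.card_fin] at this
    omega
  calc #{ν ∈ solutions k ℓ q N U M | shape q ν = shape q ν₀}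
      ≤ #(Fintype.piFinset (box k N U M (shape q ν₀))) := by
        refine card_le_card_of_injOn (encode k q U) (fun ν hν => ?_) fun ν hν ν' hν' h => ?_
        · obtain ⟨hν, hshape⟩ := mem_filter.1 hν
          rw [← hshape]
          exact (mem_filter.1 hν).2.encode_mem hUq.le hk0
        · obtain ⟨hν, hshape⟩ := mem_filter.1 hν
          obtain ⟨hν', hshape'⟩ := mem_filter.1 hν'
          exact (mem_filter.1 hν).2.eq_of_encode_eq (mem_filter.1 hν').2 hUq hNq hk
            (hshape.trans hshape'.symm) h
    _ = (N * k) ^ #{i | shape q ν₀ i = i} * U ^ (2 * ℓ - #{i | shape q ν₀ i = i}) := by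
        rw [Fintype.card_piFinset, prod_card_box, hcompl]
    _ ≤ k ^ ℓ * (N * U) ^ ℓ := pow_mul_pow_sub_le hm hUN hk0

theorem le_pow_mul_pow (hq : q.Prime) (hNU : N * U ≤ q) (hU : 1 ≤ U) (hUN : U ≤ N)
    (hℓ : 1 ≤ ℓ) (hk : 2 * ℓ ≤ k) :
    Icount k ℓ q N U M ≤ (2 * ℓ) ^ (2 * ℓ) * (k ^ ℓ * (N * U) ^ ℓ) := by
  have := Fact.mk hq
  have hUq : U < q := by nlinarith [hq.two_le]
  have hNq : N ≤ q := (Nat.le_mul_of_pos_right N hU).trans hNU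
  rw [eq_card_solutions, card_eq_sum_card_fiberwise (f := shape q) (t := univ)
    fun _ _ => mem_univ _]
  calc ∑ p, #{ν ∈ solutions k ℓ q N U M | shape q ν = p}
      ≤ ∑ _p : Fin (2 * ℓ) → Fin (2 * ℓ), k ^ ℓ * (N * U) ^ ℓ :=
        sum_le_sum fun p _ => card_filter_shape_eq_le hUq hNq hUN hk (by omega) p
    _ = (2 * ℓ) ^ (2 * ℓ) * (k ^ ℓ * (N * U) ^ ℓ) := by simp

end Icount

theorem stmt_8 (k ℓ : ℕ) (hℓ : 1 ≤ ℓ) (hk : 2 * ℓ ≤ k) :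
    ∃ C : ℝ, 0 < C ∧ ∀ (q N U : ℕ) (M : ℤ), q.Prime →
      N * U ≤ q → 1 ≤ U → U ≤ N →
      (Icount k ℓ q N U M : ℝ) ≤ C * ((N : ℝ) * U) ^ ℓ * (Real.log q) ^ (ℓ - 1) := by
  have hk0 : 0 < k := by omega
  have hlog2 : 0 < Real.log 2 := Real.log_pos one_lt_two
  set A : ℝ := (2 * ℓ) ^ (2 * ℓ) * k ^ ℓ
  refine ⟨A / Real.log 2 ^ (ℓ - 1), by positivity, fun q N U M hq hNU hU hUN => ?_⟩
  have hlogq : Real.log 2 ≤ Real.log q :=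
    Real.log_le_log two_pos (by exact_mod_cast hq.two_le)
  have hcount : (Icount k ℓ q N U M : ℝ) ≤ A * ((N : ℝ) * U) ^ ℓ := by
    have := Icount.le_pow_mul_pow (M := M) hq hNU hU hUN hℓ hk
    simp only [A, mul_assoc]
    exact_mod_cast this
  calc (Icount k ℓ q N U M : ℝ)
      ≤ A * ((N : ℝ) * U) ^ ℓ * (Real.log q / Real.log 2) ^ (ℓ - 1) :=
        hcount.trans (le_mul_of_one_le_right (by positivity)
          (one_le_pow₀ ((one_le_div hlog2).2 hlogq)))
    _ = A / Real.log 2 ^ (ℓ - 1) * ((N : ℝ) * U) ^ ℓ * Real.log q ^ (ℓ - 1) := by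
        rw [div_pow]; ring
end
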